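/- arXiv:0705.4306 — 7 statements merged into one kernel-verified Lean document; each statement's English description precedes it below -/
import Mathlib

section
/- For x > 0, define ς(x) = (1/(2πi)) ∫_{(1)} x^s exp(s²/4) ds/s (integral over the vertical line Re(s)=1). Then ς(x) = (1/√π) ∫_{-∞}^{log x} exp(-y²) dy. -/
open Complex MeasureTheory Set

/-!
For `0 < Re s` we have `1 / s = ∫₀^∞ e^{-s v} dv`, so on the line `s = σ + i t` the integrand
`x^s e^{s²/4} / s` becomes `∫₀^∞ exp (s (log x - v) + s² / 4) dv`. This double integral converges
absolutely, its modulus being `exp (σ (log x - v) + (σ² - t²) / 4)`, so we may integrate in `t`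
first. Completing the square gives `∫ exp (s w + s² / 4) dt = 2 √π e^{-w²}` whatever `σ` is, and
the substitution `y = log x - v` leaves `2 √π ∫_{-∞}^{log x} e^{-y²} dy`.
-/

lemma one_div_eq_integral_cexp_neg_mul_Ioi {s : ℂ} (hs : 0 < s.re) :
    1 / s = ∫ v in Ioi (0 : ℝ), cexp (-s * v) := by
  have hs0 : s ≠ 0 := fun h => by simp [h] at hs
  rw [integral_exp_mul_complex_Ioi (by simpa using hs)]
  field_simp
  simp

lemma integral_Ioi_comp_sub_left {E : Type*} [NormedAddCommGroup E] [NormedSpace ℝ E]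
    (f : ℝ → E) (u : ℝ) : ∫ v in Ioi (0 : ℝ), f (u - v) = ∫ y in Iio u, f y := by
  have h : (Ioi (0 : ℝ)).indicator (fun v => f (u - v))
      = fun v => (Iio u).indicator f (u - v) := by
    ext v
    simp only [indicator, mem_Ioi, mem_Iio, sub_lt_self_iff]
  rw [← integral_indicator measurableSet_Ioi, h, integral_sub_left_eq_self,
    integral_indicator measurableSet_Iio]

lemma integral_cexp_vertical_line (σ w : ℝ) :
    ∫ t : ℝ, cexp ((σ + t * I) * w + (σ + t * I) ^ 2 / 4)
      = 2 * Real.sqrt Real.pi * cexp (-(w : ℂ) ^ 2) := by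
  have hsq (t : ℝ) : ((σ : ℂ) + t * I) * w + (σ + t * I) ^ 2 / 4
      = -(1 / 4) * (t : ℂ) ^ 2 + I * (w + σ / 2) * t + (σ * w + σ ^ 2 / 4) := by
    linear_combination ((t : ℂ) ^ 2 / 4) * I_sq
  simp_rw [hsq]
  rw [integral_cexp_quadratic (by norm_num)]
  have hroot : ((Real.pi : ℂ) / -(-(1 / 4))) ^ (1 / 2 : ℂ) = 2 * Real.sqrt Real.pi := by
    have h4π : (Real.pi : ℂ) / -(-(1 / 4)) = ((2 * Real.sqrt Real.pi) ^ 2 : ℝ) := by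
      rw [mul_pow, Real.sq_sqrt Real.pi_pos.le]
      push_cast
      ring
    rw [h4π, show (1 / 2 : ℂ) = ((1 / 2 : ℝ) : ℂ) by norm_num, ← ofReal_cpow (by positivity),
      ← Real.sqrt_eq_rpow, Real.sqrt_sq (by positivity)]
    push_cast
    rfl
  rw [hroot]
  congr 2
  linear_combination ((w : ℂ) + σ / 2) ^ 2 * I_sq

lemma norm_cexp_vertical_line (σ t w : ℝ) :
    ‖cexp ((σ + t * I) * w + (σ + t * I) ^ 2 / 4)‖ = Real.exp (σ * w + (σ ^ 2 - t ^ 2) / 4) := by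
  rw [norm_exp]
  simp [sq]

lemma integrable_cexp_vertical_line_prod_Ioi {σ : ℝ} (hσ : 0 < σ) (u : ℝ) :
    Integrable
      (Function.uncurry fun t v : ℝ => cexp ((σ + t * I) * (u - v) + (σ + t * I) ^ 2 / 4))
      (volume.prod (volume.restrict (Ioi 0))) := by
  have hgauss :
      Integrable fun t : ℝ => Real.exp (σ * u + σ ^ 2 / 4) * Real.exp (-(1 / 4) * t ^ 2) :=
    (integrable_exp_neg_mul_sq (by norm_num)).const_mul _
  have hexp : IntegrableOn (fun v : ℝ => Real.exp (-σ * v)) (Ioi 0) :=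
    exp_neg_integrableOn_Ioi 0 hσ
  refine (hgauss.mul_prod hexp).mono' (by fun_prop) (ae_of_all _ fun p => le_of_eq ?_)
  rw [Function.uncurry_apply_pair, ← ofReal_sub, norm_cexp_vertical_line, ← Real.exp_add,
    ← Real.exp_add]
  ring_nf

lemma integral_vertical_line_cpow_mul_cexp_sq_div {σ : ℝ} (hσ : 0 < σ) {x : ℝ} (hx : 0 < x) :
    ∫ t : ℝ, (x : ℂ) ^ ((σ : ℂ) + t * I) * cexp ((σ + t * I) ^ 2 / 4) / (σ + t * I)
      = 2 * Real.sqrt Real.pi * ((∫ y in Iio (Real.log x), Real.exp (-y ^ 2) : ℝ) : ℂ) := by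
  have hlaplace (t : ℝ) : (x : ℂ) ^ ((σ : ℂ) + t * I) * cexp ((σ + t * I) ^ 2 / 4) / (σ + t * I)
      = ∫ v in Ioi (0 : ℝ), cexp ((σ + t * I) * (Real.log x - v) + (σ + t * I) ^ 2 / 4) := by
    rw [div_eq_mul_one_div, one_div_eq_integral_cexp_neg_mul_Ioi (by simpa using hσ),
      ← integral_const_mul]
    refine setIntegral_congr_fun measurableSet_Ioi fun v _ => ?_
    rw [cpow_def_of_ne_zero (ofReal_ne_zero.mpr hx.ne'), ← ofReal_log hx.le, ← exp_add,
      ← exp_add]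
    congr 1
    ring
  calc _ = ∫ t : ℝ, ∫ v in Ioi (0 : ℝ),
          cexp ((σ + t * I) * (Real.log x - v) + (σ + t * I) ^ 2 / 4) := by
        simp_rw [hlaplace]
    _ = ∫ v in Ioi (0 : ℝ), ∫ t : ℝ,
          cexp ((σ + t * I) * (Real.log x - v) + (σ + t * I) ^ 2 / 4) :=
        integral_integral_swap (integrable_cexp_vertical_line_prod_Ioi hσ (Real.log x))
    _ = ∫ v in Ioi (0 : ℝ), 2 * Real.sqrt Real.pi * cexp (-((Real.log x - v : ℝ) : ℂ) ^ 2) := by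
        simp_rw [← ofReal_sub, integral_cexp_vertical_line]
    _ = _ := by
        rw [integral_const_mul, integral_Ioi_comp_sub_left (fun y : ℝ => cexp (-(y : ℂ) ^ 2)),
          ← integral_complex_ofReal]
        push_cast
        rfl

/-- For `x > 0`, the contour integral `(1/(2πi)) ∫_{(1)} x^s exp(s²/4) ds/s` over the
vertical line `Re(s) = 1` (parametrized as `s = 1 + it`, `ds = i dt`, so the factor `i`
cancels with the `i` in `2πi`) equals `(1/√π) ∫_{-∞}^{log x} exp(-y²) dy`. -/
theorem stmt_0 (x : ℝ) (hx : 0 < x) :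
    (1 / (2 * Real.pi) : ℂ) *
        ∫ t : ℝ, (x : ℂ) ^ ((1 : ℂ) + t * Complex.I) *
          Complex.exp (((1 : ℂ) + t * Complex.I) ^ 2 / 4) / ((1 : ℂ) + t * Complex.I)
      = (((Real.sqrt Real.pi)⁻¹ *
          ∫ y in Set.Iio (Real.log x), Real.exp (-y ^ 2) : ℝ) : ℂ) := by
  have hline := integral_vertical_line_cpow_mul_cexp_sq_div one_pos hx
  rw [ofReal_one] at hline
  have hsqrt : (Real.sqrt Real.pi : ℂ) ≠ 0 :=
    ofReal_ne_zero.mpr (Real.sqrt_pos.mpr Real.pi_pos).ne'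
  have hπ : (Real.pi : ℂ) = Real.sqrt Real.pi * Real.sqrt Real.pi := by
    rw [← ofReal_mul, Real.mul_self_sqrt Real.pi_pos.le]
  rw [hline, hπ]
  push_cast
  field_simp
end

section
/- Let A = 4d²δ^{1-d}∫_0^1(1+δ-x²)^d dx + 2dδ², and g₂(x) = 2d(Aδ)^{-1}(1+δ-x²)^{-d} ∫_0^x (1+δ-y²)^d dy. Then g₂ satisfies (g₂'ϖ₁)' − g₂ϖ₂ = 0 on [-1,1], and for every f ∈ C¹[-1,1], ⟨f, g₂⟩ = f(1) − f(-1). -/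
/-!
Write `w = 1 + δ - x²` and `F(x) = ∫₀ˣ wᵈ`, so that `g₂` is a constant multiple of `F / wᵈ`.
Then `g₂'ϖ₁` is the corresponding multiple of the flux `wᵈ + 2dxF/w`, whose derivative
`2d(1 + δ + x²)F/w²` is that multiple of `g₂ϖ₂`. The flux is even and equals `δᵈ + 2dF(1)/δ`
at `x = ±1`, and `A` is exactly the constant making `g₂'ϖ₁ = 1` there. Integrating
`(f · g₂'ϖ₁)'` over `[-1, 1]` then gives `⟨f, g₂⟩ = f(1) - f(-1)`.
-/

noncomputable def weightPrimitive (δ : ℝ) (n : ℕ) (x : ℝ) : ℝ :=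
  ∫ y in (0 : ℝ)..x, (1 + δ - y ^ 2) ^ n

/-- `g₂` up to the constant factor `2d(Aδ)⁻¹`. -/
noncomputable def weightQuotient (δ : ℝ) (n : ℕ) (x : ℝ) : ℝ :=
  weightPrimitive δ n x / (1 + δ - x ^ 2) ^ n

/-- `g₂'ϖ₁` up to a constant factor. -/
noncomputable def weightFlux (δ : ℝ) (n : ℕ) (x : ℝ) : ℝ :=
  (1 + δ - x ^ 2) ^ n + 2 * n * x * weightPrimitive δ n x / (1 + δ - x ^ 2)

section

variable (δ : ℝ) (n : ℕ)

theorem hasDerivAt_one_add_sub_sq (x : ℝ) :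
    HasDerivAt (fun y : ℝ => 1 + δ - y ^ 2) (-(2 * x)) x := by
  simpa using (hasDerivAt_pow 2 x).const_sub (1 + δ)

theorem hasDerivAt_weightPrimitive (x : ℝ) :
    HasDerivAt (weightPrimitive δ n) ((1 + δ - x ^ 2) ^ n) x :=
  (Continuous.integral_hasStrictDerivAt (by fun_prop) 0 x).hasDerivAt

theorem continuous_weightPrimitive : Continuous (weightPrimitive δ n) :=
  continuous_iff_continuousAt.2 fun x => (hasDerivAt_weightPrimitive δ n x).continuousAt

theorem weightPrimitive_neg (x : ℝ) : weightPrimitive δ n (-x) = -weightPrimitive δ n x := by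
  have h := intervalIntegral.integral_comp_neg (a := 0) (b := x) fun y : ℝ => (1 + δ - y ^ 2) ^ n
  simp only [neg_sq, neg_zero] at h
  rw [weightPrimitive, weightPrimitive, h, intervalIntegral.integral_symm]

theorem weightPrimitive_one_nonneg (hδ : 0 ≤ δ) : 0 ≤ weightPrimitive δ n 1 :=
  intervalIntegral.integral_nonneg zero_le_one fun y hy => pow_nonneg (by nlinarith [hy.1, hy.2]) n

theorem weightFlux_neg (x : ℝ) : weightFlux δ n (-x) = weightFlux δ n x := by
  simp only [weightFlux, weightPrimitive_neg, neg_sq]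
  ring

theorem hasDerivAt_weightQuotient {x : ℝ} (hx : 1 + δ - x ^ 2 ≠ 0) :
    HasDerivAt (weightQuotient δ n) (weightFlux δ n x / (1 + δ - x ^ 2) ^ n) x := by
  refine ((hasDerivAt_weightPrimitive δ n x).div ((hasDerivAt_one_add_sub_sq δ x).pow n)
    (pow_ne_zero n hx)).congr_deriv ?_
  simp only [Pi.pow_apply, weightFlux]
  generalize weightPrimitive δ n x = F
  generalize 1 + δ - x ^ 2 = w at *
  rcases n with _ | k
  · simp
  · field_simp
    push_cast
    ring

theorem deriv_weightQuotient_mul {x : ℝ} (hx : 1 + δ - x ^ 2 ≠ 0) :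
    deriv (weightQuotient δ n) x * (1 + δ - x ^ 2) ^ n = weightFlux δ n x := by
  rw [(hasDerivAt_weightQuotient δ n hx).deriv, div_mul_cancel₀ _ (pow_ne_zero n hx)]

theorem deriv_weightQuotient_mul_of_sq_eq_one (hδ : δ ≠ 0) {x : ℝ} (hx : x ^ 2 = 1) :
    deriv (weightQuotient δ n) x * (1 + δ - x ^ 2) ^ n = weightFlux δ n 1 := by
  rw [deriv_weightQuotient_mul δ n (by simpa [hx] using hδ)]
  rcases sq_eq_one_iff.1 hx with rfl | rfl
  · rfl
  · exact weightFlux_neg δ n 1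

theorem continuousOn_weightQuotient :
    ContinuousOn (weightQuotient δ n) {x | 1 + δ - x ^ 2 ≠ 0} := fun _ hx =>
  (hasDerivAt_weightQuotient δ n hx).continuousAt.continuousWithinAt

theorem hasDerivAt_weightFlux {x : ℝ} (hx : 1 + δ - x ^ 2 ≠ 0) :
    HasDerivAt (weightFlux δ n)
      (2 * n * (1 + δ + x ^ 2) * weightPrimitive δ n x / (1 + δ - x ^ 2) ^ 2) x := by
  have hw := hasDerivAt_one_add_sub_sq δ x
  refine ((hw.pow n).add ((((hasDerivAt_id' x).const_mul (2 * n : ℝ)).mul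
    (hasDerivAt_weightPrimitive δ n x)).div hw hx)).congr_deriv ?_
  simp only [Pi.mul_apply]
  generalize weightPrimitive δ n x = F
  rw [show 1 + δ + x ^ 2 = (1 + δ - x ^ 2) + 2 * x ^ 2 by ring]
  generalize 1 + δ - x ^ 2 = w at *
  rcases n with _ | k
  · simp
  · field_simp
    push_cast
    ring

/-- The equation `(g₂'ϖ₁)' = g₂ϖ₂`, up to constant factors. -/
theorem hasDerivAt_deriv_weightQuotient_mul {x : ℝ} (hx : 1 + δ - x ^ 2 ≠ 0) :
    HasDerivAt (fun y => deriv (weightQuotient δ n) y * (1 + δ - y ^ 2) ^ n)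
      (weightQuotient δ n x * (2 * n * (1 + δ + x ^ 2) * (1 + δ - x ^ 2) ^ ((n : ℤ) - 2))) x := by
  have hU : IsOpen {y : ℝ | 1 + δ - y ^ 2 ≠ 0} := isOpen_ne_fun (by fun_prop) continuous_const
  refine (hasDerivAt_weightFlux δ n hx).congr_of_eventuallyEq ?_ |>.congr_deriv ?_
  · filter_upwards [hU.mem_nhds hx] with y hy using deriv_weightQuotient_mul δ n hy
  · rw [weightQuotient, zpow_sub₀ hx, zpow_natCast]
    field_simp

end

theorem normalization_mul_weightFlux_one {δ : ℝ} (hδ : 0 < δ) {n : ℕ} (hn : 0 < n) {A : ℝ}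
    (hA : A = 4 * n ^ 2 * δ ^ (1 - (n : ℤ)) * weightPrimitive δ n 1 + 2 * n * δ ^ 2) :
    2 * n * (A * δ)⁻¹ * δ ^ (3 - (n : ℤ)) * weightFlux δ n 1 = 1 := by
  have hA_pos : 0 < A := by
    have := weightPrimitive_one_nonneg δ n hδ.le
    rw [hA]
    positivity
  rw [zpow_sub₀ hδ.ne', zpow_natCast] at hA ⊢
  simp only [weightFlux, one_pow, add_sub_cancel_left, mul_one]
  field_simp at hA ⊢
  linear_combination -hA

theorem integral_inner_eq_sub_of_hasDerivAt_flux {a b : ℝ} (hab : a ≤ b) {f f' : ℝ → ℂ}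
    {g ϖ₁ ϖ₂ : ℝ → ℝ}
    (hf : ∀ x ∈ Set.Icc a b, HasDerivWithinAt f (f' x) (Set.Icc a b) x)
    (hf' : ContinuousOn f' (Set.Icc a b))
    (hg : ∀ x ∈ Set.Icc a b, HasDerivAt (fun y => deriv g y * ϖ₁ y) (g x * ϖ₂ x) x)
    (hgϖ₂ : ContinuousOn (fun x => g x * ϖ₂ x) (Set.Icc a b)) :
    ∫ x in a..b, (f' x * (starRingEnd ℂ) ((deriv g x : ℝ) : ℂ) * ((ϖ₁ x : ℝ) : ℂ)
        + f x * (starRingEnd ℂ) ((g x : ℝ) : ℂ) * ((ϖ₂ x : ℝ) : ℂ))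
      = f b * (deriv g b * ϖ₁ b : ℝ) - f a * (deriv g a * ϖ₁ a : ℝ) := by
  rw [← Set.uIcc_of_le hab] at hf hf' hg hgϖ₂
  rw [← intervalIntegral.integral_deriv_mul_eq_sub_of_hasDerivWithinAt hf
    (fun x hx => (hg x hx).ofReal_comp.hasDerivWithinAt) hf'.intervalIntegrable
    (Complex.continuous_ofReal.comp_continuousOn hgϖ₂).intervalIntegrable]
  refine intervalIntegral.integral_congr fun x _ => ?_
  simp only [Complex.conj_ofReal, Complex.ofReal_mul]
  ring

/-- With `A = 4d²δ^{1-d}∫_0^1(1+δ-x²)^d dx + 2dδ²` and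
`g₂(x) = 2d(Aδ)⁻¹(1+δ-x²)^{-d} ∫_0^x (1+δ-y²)^d dy`, the function `g₂` satisfies
`(g₂'ϖ₁)' − g₂ϖ₂ = 0` on `[-1,1]`, and `⟨f, g₂⟩ = f(1) − f(-1)` for every `f ∈ C¹[-1,1]`. -/
theorem stmt_6 (δ : ℝ) (hδ : 0 < δ) (d : ℤ) (hd : 2 ≤ d)
    (ϖ₁ ϖ₂ g₂ : ℝ → ℝ) (A : ℝ)
    (hϖ₁ : ∀ x, ϖ₁ x = δ ^ (3 - d) * (1 + δ - x ^ 2) ^ d)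
    (hϖ₂ : ∀ x, ϖ₂ x = 2 * (d : ℝ) * δ ^ (3 - d) * (1 + δ + x ^ 2) * (1 + δ - x ^ 2) ^ (d - 2))
    (hA : A = 4 * (d : ℝ) ^ 2 * δ ^ (1 - d) * (∫ x in (0:ℝ)..1, (1 + δ - x ^ 2) ^ d)
        + 2 * (d : ℝ) * δ ^ 2)
    (hg₂ : ∀ x, g₂ x = 2 * (d : ℝ) * (A * δ)⁻¹ * (1 + δ - x ^ 2) ^ (-d) *
        ∫ y in (0:ℝ)..x, (1 + δ - y ^ 2) ^ d) :
    (∀ x ∈ Set.Icc (-1 : ℝ) 1,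
        HasDerivAt (fun y => deriv g₂ y * ϖ₁ y) (g₂ x * ϖ₂ x) x) ∧
    (∀ f f' : ℝ → ℂ,
      (∀ x ∈ Set.Icc (-1 : ℝ) 1, HasDerivWithinAt f (f' x) (Set.Icc (-1 : ℝ) 1) x) →
      ContinuousOn f' (Set.Icc (-1 : ℝ) 1) →
      (∫ x in (-1 : ℝ)..1,
          (f' x * (starRingEnd ℂ) ((deriv g₂ x : ℝ) : ℂ) * ((ϖ₁ x : ℝ) : ℂ)
            + f x * (starRingEnd ℂ) ((g₂ x : ℝ) : ℂ) * ((ϖ₂ x : ℝ) : ℂ)))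
        = f 1 - f (-1)) := by
  obtain ⟨n, rfl⟩ : ∃ n : ℕ, d = n := ⟨d.toNat, by omega⟩
  simp only [zpow_neg, zpow_natCast, Int.cast_natCast] at hϖ₁ hϖ₂ hA hg₂
  set c := 2 * (n : ℝ) * (A * δ)⁻¹
  have hg : g₂ = fun y => c * weightQuotient δ n y := by
    ext y; rw [hg₂, weightQuotient, weightPrimitive]; ring
  have hw : ∀ x ∈ Set.Icc (-1 : ℝ) 1, 1 + δ - x ^ 2 ≠ 0 := fun x hx => by nlinarith [hx.1, hx.2]
  have hflux : ∀ y, deriv g₂ y * ϖ₁ y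
      = c * δ ^ (3 - (n : ℤ)) * (deriv (weightQuotient δ n) y * (1 + δ - y ^ 2) ^ n) := by
    intro y; rw [hg, deriv_const_mul_field, hϖ₁]; ring
  have hode : ∀ x ∈ Set.Icc (-1 : ℝ) 1,
      HasDerivAt (fun y => deriv g₂ y * ϖ₁ y) (g₂ x * ϖ₂ x) x := fun x hx => by
    simp only [hflux]
    refine ((hasDerivAt_deriv_weightQuotient_mul δ n (hw x hx)).const_mul _).congr_deriv ?_
    rw [hg, hϖ₂]; ring
  have hboundary : ∀ x : ℝ, x ^ 2 = 1 → deriv g₂ x * ϖ₁ x = 1 := fun x hx => by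
    rw [hflux, deriv_weightQuotient_mul_of_sq_eq_one δ n hδ.ne' hx]
    exact normalization_mul_weightFlux_one hδ (by omega) hA
  refine ⟨hode, fun f f' hf hf' => ?_⟩
  have hsource : ContinuousOn (fun x => g₂ x * ϖ₂ x) (Set.Icc (-1) 1) := by
    have hq := (continuousOn_weightQuotient δ n).mono hw
    have hw' : ∀ x ∈ Set.Icc (-1 : ℝ) 1, 1 + δ - x ^ 2 ≠ 0 ∨ 0 ≤ (n : ℤ) - 2 :=
      fun x hx => Or.inl (hw x hx)
    simp only [hg, hϖ₂]
    fun_prop (disch := assumption)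
  rw [integral_inner_eq_sub_of_hasDerivAt_flux (by norm_num) hf hf' hode hsource,
    hboundary 1 (one_pow 2), hboundary (-1) (by norm_num)]
  simp
end

section
/- Let α = L^{-2} with L = log D ≥ 1, Q = exp(L²) (so Q^α = e), and λ₋ as above. Then for 0 < η ≤ 2, Σ_{1 < n ≤ Q^η} λ₋(n)²/n ≪ η², with an absolute implied constant. -/
/-!
Rankin's trick: `λ₋(n)² / n = n ^ (2α) · f(n)` with `f(n) = λ₋(n)² / n ^ (1 + 2α)`, and
`n ^ (2α) ≤ e ^ (2η)` for `n ≤ Q ^ η`. The function `f` is multiplicative with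
`f(p ^ e) = (1 - p ^ (-2α))² / p ^ e` and `1 - p ^ (-2α) ≤ 2α log p`, so its Euler factors are
`1 + O(α² (log p)² / p)` and `∑_{1 < n ≤ N} f(n) ≤ exp (8α² ∑_{p ≤ N} (log p)² / p) - 1`.
Legendre's formula for `log N!` and Chebyshev's bound give `∑_{p ≤ N} (log p)² / p ≤ 3 (log N)²`,
so the exponent is `O((α log N)²) = O(η²)`.
-/

open Finset Real
open scoped Nat

theorem sum_primesLE_div_mul_log_le_log_factorial (N : ℕ) :
    ∑ p ∈ N.primesLE, ((N / p : ℕ) : ℝ) * log p ≤ log (N ! : ℝ) := by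
  have hsupp : (N !).factorization.support ⊆ N.primesLE := fun p hp ↦ by
    rw [Nat.support_factorization, Nat.mem_primeFactors] at hp
    exact Nat.mem_primesLE.2 ⟨hp.1.dvd_factorial.1 hp.2.1, hp.1⟩
  rw [log_nat_eq_sum_factorization, Finsupp.sum_of_support_subset _ hsupp _ (by simp)]
  gcongr with p hp
  have hprime := Nat.prime_of_mem_primesLE hp
  -- Legendre: the `i = 1` term of `∑ N / p ^ i` is `N / p`
  rw [Nat.factorization_factorial hprime (lt_add_one _)]
  have h1 : 1 ∈ Ico 1 (p.log N + 1) := by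
    simpa using Nat.log_pos hprime.one_lt (Nat.le_of_mem_primesLE hp)
  simpa using single_le_sum (f := fun i ↦ N / p ^ i) (by simp) h1

theorem sum_primesLE_log_div_le (N : ℕ) :
    ∑ p ∈ N.primesLE, log p / p ≤ log N + log 4 := by
  rcases N.eq_zero_or_pos with rfl | hN
  · simp [Nat.primesLE_zero, log_nonneg]
  have hN' : (0 : ℝ) < N := Nat.cast_pos.2 hN
  suffices h : N * ∑ p ∈ N.primesLE, log p / p ≤ N * (log N + log 4) from
    le_of_mul_le_mul_left h hN'
  calc (N : ℝ) * ∑ p ∈ N.primesLE, log p / p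
      ≤ ∑ p ∈ N.primesLE, (((N / p : ℕ) : ℝ) + 1) * log p := by
        rw [mul_sum]
        refine sum_le_sum fun p hp ↦ ?_
        rw [mul_div_left_comm, mul_comm]
        gcongr
        rw [← Nat.floor_div_eq_div (K := ℝ)]
        exact (Nat.lt_floor_add_one _).le
    _ = ∑ p ∈ N.primesLE, ((N / p : ℕ) : ℝ) * log p + Chebyshev.theta N := by
        rw [Chebyshev.theta_eq_sum_primesLE_log, ← sum_add_distrib]
        simp only [add_mul, one_mul]
    _ ≤ log (N ! : ℝ) + log 4 * N :=
        add_le_add (sum_primesLE_div_mul_log_le_log_factorial N)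
          (Chebyshev.theta_le_log4_mul_x hN'.le)
    _ ≤ N * log N + log 4 * N := by
        gcongr
        calc log (N ! : ℝ) ≤ log ((N : ℝ) ^ N) := by
              gcongr
              exact_mod_cast N.factorial_le_pow
          _ = N * log N := log_pow _ _
    _ = N * (log N + log 4) := by ring

theorem sum_primesLE_log_sq_div_le {N : ℕ} (hN : 2 ≤ N) :
    ∑ p ∈ N.primesLE, log p ^ 2 / p ≤ 3 * log N ^ 2 := by
  have hlog2 : log 2 ≤ log N := log_le_log (by norm_num) (mod_cast hN)
  have hlog4 : log 4 = 2 * log 2 := by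
    rw [show (4 : ℝ) = 2 ^ 2 by norm_num, log_pow]; norm_num
  calc ∑ p ∈ N.primesLE, log p ^ 2 / p ≤ ∑ p ∈ N.primesLE, log N * (log p / p) := by
        gcongr with p hp
        rw [pow_two, mul_div_assoc]
        gcongr
        · exact Nat.cast_pos.2 (Nat.prime_of_mem_primesLE hp).pos
        · exact Nat.le_of_mem_primesLE hp
    _ = log N * ∑ p ∈ N.primesLE, log p / p := (mul_sum ..).symm
    _ ≤ log N * (log N + log 4) := by
        gcongr
        exact sum_primesLE_log_div_le N
    _ ≤ 3 * log N ^ 2 := by nlinarith [log_pos (by norm_num : (1 : ℝ) < 2)]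

theorem sum_Icc_le_exp_sum_primesLE {f : ℕ → ℝ} (hf₁ : f 1 = 1)
    (hmul : ∀ {m n : ℕ}, m.Coprime n → f (m * n) = f m * f n) (hf : ∀ n, 0 ≤ f n)
    (hsum : ∀ {p : ℕ}, p.Prime → Summable (fun e ↦ f (p ^ e)))
    {a : ℕ → ℝ} (hloc : ∀ {p : ℕ}, p.Prime → ∑' e, f (p ^ e) ≤ 1 + a p) (N : ℕ) :
    ∑ n ∈ Icc 1 N, f n ≤ exp (∑ p ∈ N.primesLE, a p) := by
  have hsum' : ∀ {p : ℕ}, p.Prime → Summable (fun e ↦ ‖f (p ^ e)‖) := fun hp ↦ by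
    simpa [Real.norm_of_nonneg (hf _)] using hsum hp
  have hsmooth : ∀ n ∈ Icc 1 N, n ∈ (N + 1).smoothNumbers := fun n hn ↦ by
    rw [mem_Icc] at hn
    exact Nat.mem_smoothNumbers_of_lt (by omega) (by omega)
  calc ∑ n ∈ Icc 1 N, f n
      = ∑ n ∈ (Icc 1 N).subtype (· ∈ (N + 1).smoothNumbers), f n :=
        (sum_subtype_of_mem f hsmooth).symm
    _ ≤ ∏ p ∈ N.primesLE, ∑' e, f (p ^ e) :=
        sum_le_hasSum _ (fun n _ ↦ hf n)
          (EulerProduct.summable_and_hasSum_smoothNumbers_prod_primesBelow_tsum hf₁ hmul hsum'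
            (N + 1)).2
    _ ≤ ∏ p ∈ N.primesLE, exp (a p) := by
        refine prod_le_prod (fun p _ ↦ tsum_nonneg fun e ↦ hf _) fun p hp ↦ ?_
        exact (hloc (Nat.prime_of_mem_primesLE hp)).trans (by linarith [add_one_le_exp (a p)])
    _ = exp (∑ p ∈ N.primesLE, a p) := (exp_sum ..).symm

theorem hasSum_of_eq_div_pow {x c : ℝ} (hx : 1 < x) {g : ℕ → ℝ} (hg₀ : g 0 = 1)
    (hg : ∀ e ≠ 0, g e = c / x ^ e) : HasSum g (1 + c / (x - 1)) := by
  have hx₀ : 0 < x := one_pos.trans hx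
  have hshift : (fun e ↦ g (e + 1)) = fun e ↦ c / x * x⁻¹ ^ e := funext fun e ↦ by
    rw [hg _ (Nat.succ_ne_zero e), inv_pow, pow_succ]
    field_simp
  have hvalue : c / x * (1 - x⁻¹)⁻¹ = c / (x - 1) := by
    have : x - 1 ≠ 0 := (sub_pos.2 hx).ne'
    field_simp
  have htail : HasSum (fun e ↦ g (e + 1)) (c / (x - 1)) := by
    rw [hshift, ← hvalue]
    exact (hasSum_geometric_of_lt_one (inv_nonneg.2 hx₀.le) (inv_lt_one_of_one_lt₀ hx)).mul_left _
  simpa [hg₀] using htail.zero_add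

theorem one_sub_rpow_neg_le_mul_log {x : ℝ} (hx : 0 < x) (t : ℝ) : 1 - x ^ (-t) ≤ t * log x := by
  rw [rpow_def_of_pos hx]
  linarith [add_one_le_exp (log x * -t)]

theorem exp_sub_one_le_mul_exp (x : ℝ) : exp x - 1 ≤ x * exp x := by
  have h := mul_le_mul_of_nonneg_right (add_one_le_exp (-x)) (exp_pos x).le
  rw [← exp_add, neg_add_cancel, exp_zero] at h
  linarith

section Rankin

variable {lam : ℕ → ℝ} {β : ℝ}

theorem sq_div_rpow_mul (hmul : ∀ m n : ℕ, m.Coprime n → lam (m * n) = lam m * lam n)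
    {m n : ℕ} (hmn : m.Coprime n) :
    lam (m * n) ^ 2 / ((m * n : ℕ) : ℝ) ^ (1 + 2 * β) =
      lam m ^ 2 / (m : ℝ) ^ (1 + 2 * β) * (lam n ^ 2 / (n : ℝ) ^ (1 + 2 * β)) := by
  rw [hmul m n hmn, Nat.cast_mul, mul_rpow (Nat.cast_nonneg m) (Nat.cast_nonneg n)]
  ring

variable (hpp : ∀ p : ℕ, p.Prime → ∀ l : ℕ, 1 ≤ l →
  lam (p ^ l) = (p : ℝ) ^ ((l : ℝ) * β) * (1 - (p : ℝ) ^ (-2 * β)))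
include hpp

theorem sq_div_rpow_prime_pow {p : ℕ} (hp : p.Prime) {e : ℕ} (he : e ≠ 0) :
    lam (p ^ e) ^ 2 / ((p ^ e : ℕ) : ℝ) ^ (1 + 2 * β) = (1 - (p : ℝ) ^ (-2 * β)) ^ 2 / p ^ e := by
  have hp₀ : (0 : ℝ) < p := Nat.cast_pos.2 hp.pos
  have hpow : ((p ^ e : ℕ) : ℝ) ^ (1 + 2 * β) = p ^ e * ((p : ℝ) ^ ((e : ℝ) * β)) ^ 2 := by
    rw [Nat.cast_pow, ← rpow_natCast, ← rpow_mul hp₀.le, ← rpow_natCast _ 2,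
      ← rpow_mul hp₀.le, ← rpow_add hp₀]
    ring_nf
  rw [hpp p hp e (Nat.one_le_iff_ne_zero.2 he), hpow]
  have : (p : ℝ) ^ ((e : ℝ) * β) ≠ 0 := (rpow_pos_of_pos hp₀ _).ne'
  field_simp

theorem hasSum_sq_div_rpow_prime_pow (h1 : lam 1 = 1) {p : ℕ} (hp : p.Prime) :
    HasSum (fun e ↦ lam (p ^ e) ^ 2 / ((p ^ e : ℕ) : ℝ) ^ (1 + 2 * β))
      (1 + (1 - (p : ℝ) ^ (-2 * β)) ^ 2 / (p - 1)) :=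
  hasSum_of_eq_div_pow (Nat.one_lt_cast.2 hp.one_lt) (by simp [h1])
    fun _ he ↦ sq_div_rpow_prime_pow hpp hp he

theorem tsum_sq_div_rpow_prime_pow_le (h1 : lam 1 = 1) (hβ : 0 < β) {p : ℕ} (hp : p.Prime) :
    ∑' e, lam (p ^ e) ^ 2 / ((p ^ e : ℕ) : ℝ) ^ (1 + 2 * β) ≤ 1 + 8 * β ^ 2 * log p ^ 2 / p := by
  rw [(hasSum_sq_div_rpow_prime_pow hpp h1 hp).tsum_eq, add_le_add_iff_left]
  have hp₂ : (2 : ℝ) ≤ p := Nat.ofNat_le_cast.2 hp.two_le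
  have hc₀ : 0 ≤ 1 - (p : ℝ) ^ (-2 * β) :=
    sub_nonneg.2 (rpow_le_one_of_one_le_of_nonpos (by linarith) (by linarith))
  have hc : 1 - (p : ℝ) ^ (-2 * β) ≤ 2 * β * log p := by
    simpa using one_sub_rpow_neg_le_mul_log (by linarith : (0 : ℝ) < p) (2 * β)
  calc (1 - (p : ℝ) ^ (-2 * β)) ^ 2 / (p - 1) ≤ (2 * β * log p) ^ 2 / (p / 2) := by
        gcongr; linarith
    _ = 8 * β ^ 2 * log p ^ 2 / p := by field_simp; ring

theorem sum_Icc_sq_div_le (h1 : lam 1 = 1)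
    (hmul : ∀ m n : ℕ, m.Coprime n → lam (m * n) = lam m * lam n) (hβ : 0 < β)
    {N : ℕ} (hN : 2 ≤ N) :
    ∑ n ∈ Icc 2 N, lam n ^ 2 / n ≤
      exp (2 * (β * log N)) * (exp (24 * (β * log N) ^ 2) - 1) := by
  set f : ℕ → ℝ := fun n ↦ lam n ^ 2 / (n : ℝ) ^ (1 + 2 * β) with hf
  have hf₀ : ∀ n, 0 ≤ f n := fun n ↦ by positivity
  have hf₁ : f 1 = 1 := by simp [hf, h1]
  have hpoint : ∀ n ∈ Icc 2 N, lam n ^ 2 / n ≤ exp (2 * (β * log N)) * f n := fun n hn ↦ by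
    have hn₀ : (0 : ℝ) < n := Nat.cast_pos.2 (by grind)
    calc lam n ^ 2 / n = (n : ℝ) ^ (2 * β) * f n := by
          simp only [hf, rpow_add hn₀, rpow_one]
          field_simp
      _ ≤ (N : ℝ) ^ (2 * β) * f n := by
          gcongr
          exact (mem_Icc.1 hn).2
      _ = exp (2 * (β * log N)) * f n := by
          rw [rpow_def_of_pos (by positivity)]
          ring_nf
  have heuler : ∑ n ∈ Icc 1 N, f n ≤ exp (∑ p ∈ N.primesLE, 8 * β ^ 2 * log p ^ 2 / p) :=
    sum_Icc_le_exp_sum_primesLE hf₁ (sq_div_rpow_mul hmul) hf₀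
      (fun hp ↦ (hasSum_sq_div_rpow_prime_pow hpp h1 hp).summable)
      (tsum_sq_div_rpow_prime_pow_le hpp h1 hβ) N
  have hmertens : ∑ p ∈ N.primesLE, 8 * β ^ 2 * log p ^ 2 / p ≤ 24 * (β * log N) ^ 2 := by
    simp_rw [mul_div_assoc, ← mul_sum]
    nlinarith [sum_primesLE_log_sq_div_le hN]
  rw [← insert_Icc_add_one_left_eq_Icc (by omega : 1 ≤ N), sum_insert (by simp), hf₁] at heuler
  calc ∑ n ∈ Icc 2 N, lam n ^ 2 / n ≤ ∑ n ∈ Icc 2 N, exp (2 * (β * log N)) * f n :=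
        sum_le_sum hpoint
    _ = exp (2 * (β * log N)) * ∑ n ∈ Icc 2 N, f n := (mul_sum ..).symm
    _ ≤ exp (2 * (β * log N)) * (exp (24 * (β * log N) ^ 2) - 1) := by
        gcongr
        linarith [exp_le_exp.2 hmertens]

end Rankin

/-- Let `L = log D ≥ 1`, `α = L⁻²`, `Q = exp(L²)`, and let `λ₋` be the multiplicative
function with `λ₋(p^l) = p^{lα}(1 − p^{-2α})` for `l ≥ 1`. Then for `0 < η ≤ 2`,
`Σ_{1 < n ≤ Q^η} λ₋(n)²/n ≪ η²` with an absolute implied constant. -/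
theorem stmt_10 : ∃ C > (0 : ℝ), ∀ D : ℝ, 1 ≤ Real.log D →
    ∀ lam : ℕ → ℝ, lam 1 = 1 →
    (∀ m n : ℕ, m.Coprime n → lam (m * n) = lam m * lam n) →
    (∀ p : ℕ, p.Prime → ∀ l : ℕ, 1 ≤ l →
      lam (p ^ l) = (p : ℝ) ^ ((l : ℝ) * (Real.log D ^ 2)⁻¹) *
        (1 - (p : ℝ) ^ (-2 * (Real.log D ^ 2)⁻¹))) →
    ∀ η : ℝ, 0 < η → η ≤ 2 →
      ∑ n ∈ Finset.Icc 2 (Nat.floor ((Real.exp (Real.log D ^ 2)) ^ η)),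
          (lam n) ^ 2 / (n : ℝ)
        ≤ C * η ^ 2 := by
  refine ⟨24 * exp 100, by positivity, fun D hD lam h1 hmul hpp η hη hη2 ↦ ?_⟩
  set N := ⌊exp (log D ^ 2) ^ η⌋₊
  rcases lt_or_ge N 2 with hN | hN
  · rw [Icc_eq_empty (by omega), sum_empty]
    positivity
  have hβ : 0 < (log D ^ 2)⁻¹ := by positivity
  have ht : (log D ^ 2)⁻¹ * log N ≤ η := by
    rw [inv_mul_le_iff₀ (by positivity)]
    calc log N ≤ log (exp (log D ^ 2) ^ η) :=
          log_le_log (by positivity) (Nat.floor_le (by positivity))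
      _ = log D ^ 2 * η := by rw [log_rpow (exp_pos _), log_exp]; ring
  have hexp_sub_one : ∀ {x : ℝ}, 0 ≤ x → 0 ≤ exp x - 1 := fun hx ↦ sub_nonneg.2 (one_le_exp hx)
  calc ∑ n ∈ Icc 2 N, lam n ^ 2 / n
      ≤ exp (2 * η) * (exp (24 * η ^ 2) - 1) := by
        refine (sum_Icc_sq_div_le hpp h1 hmul hβ hN).trans ?_
        gcongr
        exact hexp_sub_one (by positivity)
    _ ≤ exp 4 * (24 * η ^ 2 * exp 96) := by
        refine mul_le_mul (exp_le_exp.2 (by linarith)) ?_ (hexp_sub_one (by positivity))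
          (exp_pos _).le
        calc exp (24 * η ^ 2) - 1 ≤ 24 * η ^ 2 * exp (24 * η ^ 2) := exp_sub_one_le_mul_exp _
          _ ≤ 24 * η ^ 2 * exp 96 := by gcongr; nlinarith
    _ = 24 * exp 100 * η ^ 2 := by rw [show (100 : ℝ) = 4 + 96 by norm_num, exp_add]; ring
end

section
/- With U±(x) = (1/(2πi))∫_{C±} Q^{xs} ds/s as above and R = ω log Q, we have U₊(x) = 1 + O((1+Rx)^{-1}) and U₋(x) ≪ (1+Rx)^{-1} for x ≥ 0, and by symmetry U₋(x) = 1 + O((1+R|x|)^{-1}) and U₊(x) ≪ (1+R|x|)^{-1} for x ≤ 0, with absolute implied constants. -/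
/-!
On `s = ω e^{iθ}` one has `ds / s = i dθ` and `Q^{xs} = exp (c e^{iθ})` with `c = xR`, so `U₊` and
`U₋` are the averages of `θ ↦ exp (c e^{iθ})` over the two halves of the circle. Together they make
up the full circle average of the entire function `z ↦ exp (c z)`, which is `1` by the mean value
property, and rotating by `π` turns `U₋` at `c` into `U₊` at `-c`. Everything therefore reduces to
`U₊` at `-r` with `r ≥ 0`: there `|exp (-r e^{iθ})| = exp (-r cos θ)`, and Jordan's inequality
`cos θ ≥ 1 - 2|θ|/π` bounds its integral by `π (1 - e^{-r}) / r ≤ 2π / (1 + r)`.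
-/

open MeasureTheory Real

noncomputable def rightArcAverage (c : ℂ) : ℂ :=
  ((2 * π)⁻¹ : ℂ) * ∫ θ in (-(π / 2))..(π / 2),
    Complex.exp (c * Complex.exp ((θ : ℂ) * Complex.I))

noncomputable def leftArcAverage (c : ℂ) : ℂ :=
  ((2 * π)⁻¹ : ℂ) * ∫ θ in (π / 2)..(3 * π / 2),
    Complex.exp (c * Complex.exp ((θ : ℂ) * Complex.I))

theorem intervalIntegrable_exp_mul_exp_mul_I (c : ℂ) (a b : ℝ) :
    IntervalIntegrable (fun θ : ℝ => Complex.exp (c * Complex.exp ((θ : ℂ) * Complex.I)))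
      volume a b :=
  (by fun_prop : Continuous _).intervalIntegrable a b

theorem rightArcAverage_add_leftArcAverage (c : ℂ) :
    rightArcAverage c + leftArcAverage c = 1 := by
  have hmean : circleAverage (fun z => Complex.exp (c * z)) 0 1 = 1 := by
    rw [DiffContOnCl.circleAverage (by fun_prop : Differentiable ℂ _).diffContOnCl]; simp
  rw [circleAverage_eq_integral_add (-(π / 2)),
    intervalIntegral.integral_comp_add_right (fun θ => Complex.exp (c * circleMap 0 1 θ)),
    show (0 : ℝ) + -(π / 2) = -(π / 2) by ring, show 2 * π + -(π / 2) = 3 * π / 2 by ring]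
    at hmean
  rw [rightArcAverage, leftArcAverage, ← mul_add, intervalIntegral.integral_add_adjacent_intervals
    (intervalIntegrable_exp_mul_exp_mul_I c _ _) (intervalIntegrable_exp_mul_exp_mul_I c _ _)]
  simpa [circleMap, Complex.real_smul] using hmean

theorem leftArcAverage_eq_rightArcAverage_neg (c : ℂ) :
    leftArcAverage c = rightArcAverage (-c) := by
  rw [leftArcAverage, rightArcAverage]
  congr 1
  convert (intervalIntegral.integral_comp_add_right (a := -(π / 2)) (b := π / 2)
    (fun θ : ℝ => Complex.exp (c * Complex.exp ((θ : ℂ) * Complex.I))) π).symm using 1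
  · congr 1 <;> ring
  · congr 1; ext θ
    push_cast
    rw [add_mul, Complex.exp_add, Complex.exp_pi_mul_I]; ring_nf

theorem norm_rightArcAverage_sub_one (c : ℂ) : ‖rightArcAverage c - 1‖ = ‖leftArcAverage c‖ := by
  rw [← rightArcAverage_add_leftArcAverage c, sub_add_cancel_left, norm_neg]

theorem norm_leftArcAverage_sub_one (c : ℂ) : ‖leftArcAverage c - 1‖ = ‖rightArcAverage c‖ := by
  rw [← rightArcAverage_add_leftArcAverage c, sub_add_cancel_right, norm_neg]

theorem integral_exp_neg_mul_cos_le {r : ℝ} (hr : 0 ≤ r) :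
    ∫ θ in (0 : ℝ)..(π / 2), rexp (-(r * cos θ)) ≤ π / (1 + r) := by
  rcases hr.eq_or_lt with rfl | hr
  · simp only [zero_mul, neg_zero, exp_zero, intervalIntegral.integral_const, sub_zero,
      smul_eq_mul, mul_one, add_zero, div_one, half_le_self_iff]
    exact pi_pos.le
  have hjordan : ∫ θ in (0 : ℝ)..(π / 2), rexp (-(r * cos θ))
      ≤ ∫ θ in (0 : ℝ)..(π / 2), rexp (2 * r / π * θ - r) := by
    refine intervalIntegral.integral_mono_on (by positivity)
      ((by fun_prop : Continuous _).intervalIntegrable _ _)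
      ((by fun_prop : Continuous _).intervalIntegrable _ _) fun θ hθ => exp_le_exp.2 ?_
    have hcos := one_sub_mul_le_cos hθ.1 hθ.2
    have : 2 * r / π * θ - r = -(r * (1 - 2 / π * θ)) := by ring
    rw [this]
    nlinarith
  have hprimitive : ∫ θ in (0 : ℝ)..(π / 2), rexp (2 * r / π * θ - r)
      = π / (2 * r) * (1 - rexp (-r)) := by
    rw [intervalIntegral.integral_comp_mul_sub rexp (by positivity) r, integral_exp,
      show 2 * r / π * (π / 2) - r = 0 by field_simp; ring, mul_zero, zero_sub, exp_zero,
      smul_eq_mul]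
    field_simp
  have hexp : (1 + r) * (1 - rexp (-r)) ≤ 2 * r := by
    nlinarith [add_one_le_exp (-r), exp_pos (-r)]
  calc _ ≤ π / (2 * r) * (1 - rexp (-r)) := hjordan.trans_eq hprimitive
    _ ≤ π / (1 + r) := by
      rw [div_mul_eq_mul_div, div_le_div_iff₀ (by positivity) (by positivity)]
      nlinarith [pi_pos]

theorem integral_exp_neg_mul_cos_symm_le {r : ℝ} (hr : 0 ≤ r) :
    ∫ θ in (-(π / 2))..(π / 2), rexp (-(r * cos θ)) ≤ 2 * π / (1 + r) := by
  have hintegrable : ∀ a b : ℝ, IntervalIntegrable (fun θ => rexp (-(r * cos θ))) volume a b :=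
    fun a b => (by fun_prop : Continuous _).intervalIntegrable a b
  have heven : ∫ θ in (-(π / 2))..0, rexp (-(r * cos θ))
      = ∫ θ in (0 : ℝ)..(π / 2), rexp (-(r * cos θ)) := by
    simpa using (intervalIntegral.integral_comp_neg (a := 0) (b := π / 2)
      (fun θ => rexp (-(r * cos θ)))).symm
  rw [← intervalIntegral.integral_add_adjacent_intervals (hintegrable _ 0) (hintegrable 0 _), heven]
  linarith [integral_exp_neg_mul_cos_le hr,
    show 2 * π / (1 + r) = π / (1 + r) + π / (1 + r) by ring]

theorem norm_rightArcAverage_neg_le {r : ℝ} (hr : 0 ≤ r) :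
    ‖rightArcAverage (-r)‖ ≤ 1 / (1 + r) := by
  have hnorm : ∀ θ : ℝ, ‖Complex.exp (-(r : ℂ) * Complex.exp ((θ : ℂ) * Complex.I))‖
      = rexp (-(r * cos θ)) := by
    intro θ
    simp [Complex.norm_exp, Complex.exp_ofReal_mul_I_re]
  calc ‖rightArcAverage (-r)‖
      ≤ (2 * π)⁻¹ * ∫ θ in (-(π / 2))..(π / 2), rexp (-(r * cos θ)) := by
        have h2pi : ‖((2 * π)⁻¹ : ℂ)‖ = (2 * π)⁻¹ := by simp [abs_of_pos pi_pos]
        rw [rightArcAverage, norm_mul, h2pi]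
        gcongr
        refine (intervalIntegral.norm_integral_le_integral_norm (by linarith [pi_pos])).trans_eq ?_
        simp_rw [hnorm]
    _ ≤ (2 * π)⁻¹ * (2 * π / (1 + r)) := by gcongr; exact integral_exp_neg_mul_cos_symm_le hr
    _ = 1 / (1 + r) := by field_simp

theorem norm_leftArcAverage_le {r : ℝ} (hr : 0 ≤ r) : ‖leftArcAverage r‖ ≤ 1 / (1 + r) := by
  rw [leftArcAverage_eq_rightArcAverage_neg]
  exact norm_rightArcAverage_neg_le hr

theorem norm_rightArcAverage_sub_one_le {r : ℝ} (hr : 0 ≤ r) :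
    ‖rightArcAverage r - 1‖ ≤ 1 / (1 + r) := by
  rw [norm_rightArcAverage_sub_one]
  exact norm_leftArcAverage_le hr

theorem norm_leftArcAverage_neg_sub_one_le {r : ℝ} (hr : 0 ≤ r) :
    ‖leftArcAverage (-r) - 1‖ ≤ 1 / (1 + r) := by
  rw [norm_leftArcAverage_sub_one]
  exact norm_rightArcAverage_neg_le hr

/-- With `U₊(x) = (1/(2πi))∫_{C₊} Q^{xs} ds/s` over the right semicircle of `|s| = ω`
(parametrized as `(1/(2π))∫_{-π/2}^{π/2} exp(xω e^{iθ} log Q) dθ`), `U₋` likewise over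
the left semicircle, and `R = ω log Q`: `U₊(x) = 1 + O((1+Rx)⁻¹)`, `U₋(x) ≪ (1+Rx)⁻¹`
for `x ≥ 0`, and `U₋(x) = 1 + O((1+R|x|)⁻¹)`, `U₊(x) ≪ (1+R|x|)⁻¹` for `x ≤ 0`, with
absolute implied constants. -/
theorem stmt_12 : ∃ C > (0 : ℝ), ∀ Q ω : ℝ, 1 < Q → 0 < ω → ∀ x : ℝ,
    (0 ≤ x →
      ‖((2 * Real.pi)⁻¹ : ℂ) * (∫ θ in (-(Real.pi / 2))..(Real.pi / 2),
          Complex.exp (((x * ω * Real.log Q : ℝ) : ℂ) * Complex.exp ((θ : ℂ) * Complex.I)))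
        - 1‖ ≤ C / (1 + ω * Real.log Q * x) ∧
      ‖((2 * Real.pi)⁻¹ : ℂ) * (∫ θ in (Real.pi / 2)..(3 * Real.pi / 2),
          Complex.exp (((x * ω * Real.log Q : ℝ) : ℂ) * Complex.exp ((θ : ℂ) * Complex.I)))‖
        ≤ C / (1 + ω * Real.log Q * x)) ∧
    (x ≤ 0 →
      ‖((2 * Real.pi)⁻¹ : ℂ) * (∫ θ in (Real.pi / 2)..(3 * Real.pi / 2),
          Complex.exp (((x * ω * Real.log Q : ℝ) : ℂ) * Complex.exp ((θ : ℂ) * Complex.I)))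
        - 1‖ ≤ C / (1 + ω * Real.log Q * |x|) ∧
      ‖((2 * Real.pi)⁻¹ : ℂ) * (∫ θ in (-(Real.pi / 2))..(Real.pi / 2),
          Complex.exp (((x * ω * Real.log Q : ℝ) : ℂ) * Complex.exp ((θ : ℂ) * Complex.I)))‖
        ≤ C / (1 + ω * Real.log Q * |x|)) := by
  refine ⟨1, one_pos, fun Q ω hQ hω x => ?_⟩
  have hR : 0 < ω * Real.log Q := mul_pos hω (Real.log_pos hQ)
  refine ⟨fun hx => ?_, fun hx => ?_⟩
  · have hr : 0 ≤ x * ω * Real.log Q := by nlinarith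
    rw [show ω * Real.log Q * x = x * ω * Real.log Q by ring]
    exact ⟨norm_rightArcAverage_sub_one_le hr, norm_leftArcAverage_le hr⟩
  · have hr : 0 ≤ -(x * ω * Real.log Q) := by nlinarith
    rw [abs_of_nonpos hx, show ω * Real.log Q * -x = -(x * ω * Real.log Q) by ring,
      show ((x * ω * Real.log Q : ℝ) : ℂ) = -((-(x * ω * Real.log Q) : ℝ) : ℂ) by push_cast; ring]
    exact ⟨norm_leftArcAverage_neg_sub_one_le hr, norm_rightArcAverage_neg_le hr⟩
end

section
/- Let U₋(ε) = (1/(2πi))∫_{C₋} Q^{εs} ds/s where C₋ is the left half of the circle |s| = ω and R = ω log Q. By deforming the contour, U₋(ε) = (1/π)∫_R^∞ sin(εy)/y dy. Moreover, if εR is a nonzero integer multiple of 2π, then |U₋(ε)| ≫ (εR)^{-1}. -/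
/-!
Both sides depend only on `x = εR`, so instead of deforming the contour we compare derivatives
in `x`. Differentiating `∫_{π/2}^{3π/2} exp(x e^{iθ}) dθ` under the integral sign produces the
integrand `e^{iθ} exp(x e^{iθ})`, the `θ`-derivative of `exp(x e^{iθ}) / (ix)`; evaluating at
`e^{iθ} = -i, i` gives `-2 sin x / x`. This is also the derivative of `2 ∫_x^∞ sin u / u du`, and
both functions tend to `0` as `x → ∞`, so they agree. Integrating by parts twice,
`∫_x^∞ sin u / u du = cos x / x + sin x / x² + O(x⁻²)`, which is `1 / x + O(x⁻²)` when
`x ∈ 2πℤ`; this gives the lower bound.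
-/

open MeasureTheory Filter Set Real Topology

section

variable {E : Type*} [NormedAddCommGroup E] [NormedSpace ℝ E]

theorem hasDerivAt_integral_Ioi [CompleteSpace E] {f : ℝ → E} {a x : ℝ}
    (hf : IntegrableOn f (Ioi a)) (hx : a < x) (hfx : ContinuousAt f x) :
    HasDerivAt (fun t => ∫ u in Ioi t, f u) (-f x) x := by
  have hderiv : HasDerivAt (fun t => (∫ u in Ioi a, f u) - ∫ u in a..t, f u) (-f x) x := by
    refine (intervalIntegral.integral_hasDerivAt_right ?_ ?_ hfx).const_sub _
    · exact (intervalIntegrable_iff_integrableOn_Ioc_of_le hx.le).2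
        (hf.mono_set Ioc_subset_Ioi_self)
    · exact AEStronglyMeasurable.stronglyMeasurableAtFilter_of_mem hf.aestronglyMeasurable
        (Ioi_mem_nhds hx)
  refine hderiv.congr_of_eventuallyEq ?_
  filter_upwards [Ioi_mem_nhds hx] with t ht
  exact (intervalIntegral.integral_Ioi_sub_Ioi hf ht.le).symm ▸ (sub_sub_cancel _ _).symm

theorem eqOn_Ioi_of_hasDerivAt_of_tendsto {f g : ℝ → E} {f' : ℝ → E} {a : ℝ} {l : E}
    (hf : ∀ x ∈ Ioi a, HasDerivAt f (f' x) x) (hg : ∀ x ∈ Ioi a, HasDerivAt g (f' x) x)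
    (hfl : Tendsto f atTop (𝓝 l)) (hgl : Tendsto g atTop (𝓝 l)) : EqOn f g (Ioi a) := by
  have hconst : ∀ x ∈ Ioi a, ∀ y ∈ Ioi a, (f - g) x = (f - g) y := fun x hx y hy =>
    isOpen_Ioi.is_const_of_deriv_eq_zero isConnected_Ioi.isPreconnected
      (fun z hz => ((hf z hz).sub (hg z hz)).differentiableAt.differentiableWithinAt)
      (fun z hz => by simpa using ((hf z hz).sub (hg z hz)).deriv) hx hy
  intro x hx
  have hlim : Tendsto (f - g) atTop (𝓝 ((f - g) x)) :=
    tendsto_const_nhds.congr' <| by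
      filter_upwards [eventually_gt_atTop a] with y hy using hconst x hx y hy
  have hlim' : Tendsto (f - g) atTop (𝓝 0) := sub_self l ▸ hfl.sub hgl
  exact sub_eq_zero.1 (tendsto_nhds_unique hlim hlim')

end

section SinIntegralTail

-- `∫ u in x..∞, sin u / u` for `x > 0`, integrated by parts twice so that the remaining integral
-- converges absolutely.
noncomputable def sinIntegralTail (x : ℝ) : ℝ :=
  cos x / x + sin x / x ^ 2 - 2 * ∫ u in Ioi x, sin u / u ^ 3

variable {x : ℝ}

theorem norm_sin_div_pow_three_le {u : ℝ} (hu : 0 < u) : ‖sin u / u ^ 3‖ ≤ u ^ (-3 : ℝ) := by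
  have hpow : u ^ (-3 : ℝ) = (u ^ 3)⁻¹ := by
    rw [Real.rpow_neg hu.le]
    norm_cast
  rw [hpow, Real.norm_eq_abs, abs_div, abs_of_pos (pow_pos hu 3), div_eq_mul_inv]
  exact mul_le_of_le_one_left (by positivity) (abs_sin_le_one u)

theorem integrableOn_sin_div_pow_three (hx : 0 < x) :
    IntegrableOn (fun u => sin u / u ^ 3) (Ioi x) := by
  refine (integrableOn_Ioi_rpow_of_lt (by norm_num : (-3 : ℝ) < -1) hx).mono'
    (continuous_sin.measurable.div (measurable_id.pow_const 3)).aestronglyMeasurable ?_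
  filter_upwards [ae_restrict_mem measurableSet_Ioi] with u hu
  exact norm_sin_div_pow_three_le (hx.trans hu)

theorem abs_integral_sin_div_pow_three_le (hx : 0 < x) :
    |∫ u in Ioi x, sin u / u ^ 3| ≤ 1 / (2 * x ^ 2) := by
  calc |∫ u in Ioi x, sin u / u ^ 3|
      ≤ ∫ u in Ioi x, u ^ (-3 : ℝ) := by
        rw [← Real.norm_eq_abs]
        refine norm_integral_le_of_norm_le
          (integrableOn_Ioi_rpow_of_lt (by norm_num : (-3 : ℝ) < -1) hx) ?_
        filter_upwards [ae_restrict_mem measurableSet_Ioi] with u hu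
        exact norm_sin_div_pow_three_le (hx.trans hu)
    _ = 1 / (2 * x ^ 2) := by
        rw [integral_Ioi_rpow_of_lt (by norm_num) hx]
        norm_num
        ring

theorem hasDerivAt_sinIntegralTail (hx : 0 < x) :
    HasDerivAt sinIntegralTail (-(sin x / x)) x := by
  have hcos := (hasDerivAt_cos x).div (hasDerivAt_id x) hx.ne'
  have hsin := (hasDerivAt_sin x).div (hasDerivAt_pow 2 x) (by positivity)
  have htail := hasDerivAt_integral_Ioi (integrableOn_sin_div_pow_three (half_pos hx))
    (half_lt_self hx) (by fun_prop (disch := positivity))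
  refine ((hcos.add hsin).sub (htail.const_mul 2)).congr_deriv ?_
  simp only [id]
  field_simp
  ring

theorem abs_sinIntegralTail_le (hx : 1 ≤ x) : |sinIntegralTail x| ≤ 3 / x := by
  have hx0 : 0 < x := one_pos.trans_le hx
  have hsq : 1 / x ^ 2 ≤ 1 / x := one_div_le_one_div_of_le hx0 (by nlinarith)
  have hcos : |cos x / x| ≤ 1 / x := by
    rw [abs_div, abs_of_pos hx0]
    gcongr
    exact abs_cos_le_one x
  have hsin : |sin x / x ^ 2| ≤ 1 / x := by
    rw [abs_div, abs_of_pos (pow_pos hx0 2)]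
    exact (div_le_div_of_nonneg_right (abs_sin_le_one x) (by positivity)).trans hsq
  have htail : |2 * ∫ u in Ioi x, sin u / u ^ 3| ≤ 1 / x := by
    rw [abs_mul, abs_two]
    linarith [abs_integral_sin_div_pow_three_le hx0,
      show 2 * (1 / (2 * x ^ 2)) = 1 / x ^ 2 by ring]
  unfold sinIntegralTail
  linarith [show 3 / x = 1 / x + 1 / x + 1 / x by ring, abs_add_le (cos x / x) (sin x / x ^ 2),
    abs_sub (cos x / x + sin x / x ^ 2) (2 * ∫ u in Ioi x, sin u / u ^ 3)]

theorem tendsto_sinIntegralTail_atTop : Tendsto sinIntegralTail atTop (𝓝 0) := by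
  refine squeeze_zero_norm' (a := fun x => 3 / x) ?_ (tendsto_const_nhds.div_atTop tendsto_id)
  filter_upwards [eventually_ge_atTop 1] with x hx
  exact abs_sinIntegralTail_le hx

theorem integral_sin_div_eq_sub {a b : ℝ} (ha : 0 < a) (hb : 0 < b) :
    ∫ u in a..b, sin u / u = sinIntegralTail a - sinIntegralTail b := by
  have hpos : ∀ u ∈ uIcc a b, 0 < u := fun u hu => (lt_min ha hb).trans_le hu.1
  rw [intervalIntegral.integral_eq_sub_of_hasDerivAt (f := -sinIntegralTail)
    (fun u hu => by simpa using (hasDerivAt_sinIntegralTail (hpos u hu)).neg)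
    (ContinuousOn.intervalIntegrable (u := fun u => sin u / u)
      (continuousOn_sin.div continuousOn_id fun u hu => (hpos u hu).ne'))]
  simp only [Pi.neg_apply]
  ring

theorem tendsto_integral_sin_div (hx : 0 < x) :
    Tendsto (fun T => ∫ u in x..T, sin u / u) atTop (𝓝 (sinIntegralTail x)) := by
  have hlim := (tendsto_const_nhds (x := sinIntegralTail x)).sub tendsto_sinIntegralTail_atTop
  rw [sub_zero] at hlim
  refine hlim.congr' ?_
  filter_upwards [eventually_gt_atTop 0] with T hT
  exact (integral_sin_div_eq_sub hx hT).symm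

theorem tendsto_integral_sin_mul_div {ε R : ℝ} (hε : 0 < ε) (hR : 0 < R) :
    Tendsto (fun T => ∫ y in R..T, sin (ε * y) / y) atTop (𝓝 (sinIntegralTail (ε * R))) := by
  have hsubst : ∀ T, ∫ u in ε * R..ε * T, sin u / u = ∫ y in R..T, sin (ε * y) / y := fun T => by
    rw [← intervalIntegral.smul_integral_comp_mul_left, smul_eq_mul,
      ← intervalIntegral.integral_const_mul]
    refine intervalIntegral.integral_congr fun y _ => ?_
    rw [← mul_div_assoc, mul_div_mul_left _ _ hε.ne']
  exact ((tendsto_integral_sin_div (mul_pos hε hR)).comp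
    (tendsto_id.const_mul_atTop hε)).congr hsubst

theorem inv_two_mul_le_sinIntegralTail (hx : 2 ≤ x) (hcos : cos x = 1) :
    (2 * x)⁻¹ ≤ sinIntegralTail x := by
  have hx0 : 0 < x := two_pos.trans_le hx
  have hsin : sin x = 0 := by nlinarith [sin_sq_add_cos_sq x]
  have hJ := abs_le.1 (abs_integral_sin_div_pow_three_le hx0)
  have hsq : 1 / (2 * x ^ 2) ≤ 1 / (4 * x) :=
    one_div_le_one_div_of_le (by positivity) (by nlinarith)
  rw [sinIntegralTail, hcos, hsin, zero_div, add_zero]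
  have : (2 * x)⁻¹ = 1 / x - 2 * (1 / (4 * x)) := by field_simp; ring
  linarith

end SinIntegralTail

section LeftArcIntegral

open Complex

-- `2π U₋(ε)` for `x = εR`: on `s = ω e^{iθ}` one has `Q^{εs} ds/s = i exp(x e^{iθ}) dθ`.
noncomputable def leftArcIntegral (x : ℝ) : ℂ :=
  ∫ θ in π / 2..3 * π / 2, cexp (x * cexp (θ * I))

theorem norm_cexp_ofReal_mul_cexp_ofReal_mul_I (x θ : ℝ) :
    ‖cexp (x * cexp (θ * I))‖ = rexp (x * Real.cos θ) := by
  rw [norm_exp, re_ofReal_mul, exp_ofReal_mul_I_re]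

theorem hasDerivAt_cexp_ofReal_mul (c : ℂ) (y : ℝ) :
    HasDerivAt (fun y : ℝ => cexp (y * c)) (c * cexp (y * c)) y := by
  simpa [mul_comm] using ((hasDerivAt_mul_const c).cexp).comp_ofReal (z := y)

theorem cexp_pi_div_two_mul_I : cexp ((π / 2 : ℝ) * I) = I := by
  simp [exp_mul_I]

theorem cexp_three_pi_div_two_mul_I : cexp ((3 * π / 2 : ℝ) * I) = -I := by
  rw [show ((3 * π / 2 : ℝ) : ℂ) * I = (π / 2 : ℝ) * I + π * I by push_cast; ring, Complex.exp_add,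
    cexp_pi_div_two_mul_I, exp_pi_mul_I]
  ring

theorem integral_cexp_mul_I_mul_cexp {x : ℝ} (hx : x ≠ 0) :
    ∫ θ in π / 2..3 * π / 2, cexp (θ * I) * cexp (x * cexp (θ * I)) =
      -(2 * Real.sin x / x : ℝ) := by
  have hx' : (x : ℂ) ≠ 0 := ofReal_ne_zero.2 hx
  have hanti : ∀ θ : ℝ, HasDerivAt (fun θ : ℝ => (x * I)⁻¹ * cexp (x * cexp (θ * I)))
      (cexp (θ * I) * cexp (x * cexp (θ * I))) θ := fun θ =>
    ((((hasDerivAt_cexp_ofReal_mul I θ).const_mul (x : ℂ)).cexp).const_mul _).congr_deriv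
      (by field_simp)
  rw [intervalIntegral.integral_eq_sub_of_hasDerivAt (fun θ _ => hanti θ)
    (Continuous.intervalIntegrable (by fun_prop) _ _), cexp_three_pi_div_two_mul_I,
    cexp_pi_div_two_mul_I, show (x : ℂ) * -I = (-x : ℝ) * I by push_cast; ring, exp_mul_I,
    exp_mul_I, ← ofReal_cos, ← ofReal_sin, ← ofReal_cos, ← ofReal_sin, Real.cos_neg, Real.sin_neg]
  push_cast
  field_simp
  ring

theorem hasDerivAt_leftArcIntegral {x : ℝ} (hx : x ≠ 0) :
    HasDerivAt leftArcIntegral (-(2 * Real.sin x / x : ℝ)) x := by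
  have hmeas : ∀ y : ℝ, AEStronglyMeasurable (fun θ : ℝ => cexp (y * cexp (θ * I))) := fun y =>
    (by fun_prop : Continuous fun θ : ℝ => cexp (y * cexp (θ * I))).aestronglyMeasurable
  have hbound : ∀ θ : ℝ, ∀ y ∈ Metric.ball x 1,
      ‖cexp (θ * I) * cexp (y * cexp (θ * I))‖ ≤ rexp (|x| + 1) := by
    intro θ y hy
    rw [norm_mul, norm_exp_ofReal_mul_I, one_mul, norm_cexp_ofReal_mul_cexp_ofReal_mul_I]
    refine Real.exp_le_exp.2 ((le_abs_self _).trans ?_)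
    rw [abs_mul]
    have hyx : |y| - |x| < 1 := (abs_sub_abs_le_abs_sub y x).trans_lt (mem_ball_iff_norm.1 hy)
    nlinarith [abs_cos_le_one θ, abs_nonneg y]
  have key := intervalIntegral.hasDerivAt_integral_of_dominated_loc_of_deriv_le
    (a := π / 2) (b := 3 * π / 2) (F := fun (y θ : ℝ) => cexp (y * cexp (θ * I)))
    (F' := fun (y θ : ℝ) => cexp (θ * I) * cexp (y * cexp (θ * I)))
    (Metric.ball_mem_nhds x one_pos) (.of_forall fun y => (hmeas y).restrict)
    (Continuous.intervalIntegrable (by fun_prop) _ _)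
    (Continuous.aestronglyMeasurable (by fun_prop)).restrict
    (.of_forall fun θ _ => hbound θ) intervalIntegrable_const
    (.of_forall fun θ _ y _ => hasDerivAt_cexp_ofReal_mul _ y)
  rw [integral_cexp_mul_I_mul_cexp hx] at key
  exact key.2

theorem tendsto_leftArcIntegral_atTop : Tendsto leftArcIntegral atTop (𝓝 0) := by
  have hle : π / 2 ≤ 3 * π / 2 := by linarith [pi_pos]
  have hcos : ∀ θ ∈ uIoc (π / 2) (3 * π / 2), Real.cos θ ≤ 0 := fun θ hθ => by
    rw [uIoc_of_le hle] at hθ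
    exact Real.cos_nonpos_of_pi_div_two_le_of_le hθ.1.le (by linarith [hθ.2])
  have hlim := intervalIntegral.tendsto_integral_filter_of_dominated_convergence
    (a := π / 2) (b := 3 * π / 2) (l := atTop) (f := fun _ => (0 : ℂ))
    (F := fun (y θ : ℝ) => cexp (y * cexp (θ * I))) (fun _ => 1)
    (.of_forall fun y => (Continuous.aestronglyMeasurable (by fun_prop)))
    (by
      filter_upwards [eventually_ge_atTop 0] with y hy
      refine .of_forall fun θ hθ => ?_
      rw [norm_cexp_ofReal_mul_cexp_ofReal_mul_I, Real.exp_le_one_iff]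
      exact mul_nonpos_of_nonneg_of_nonpos hy (hcos θ hθ))
    intervalIntegrable_const
    (by
      filter_upwards [volume.ae_ne (3 * π / 2)] with θ hθ hθI
      rw [uIoc_of_le hle] at hθI
      have hneg : Real.cos θ < 0 :=
        Real.cos_neg_of_pi_div_two_lt_of_lt hθI.1 (by linarith [lt_of_le_of_ne hθI.2 hθ])
      rw [tendsto_zero_iff_norm_tendsto_zero]
      simp only [norm_cexp_ofReal_mul_cexp_ofReal_mul_I]
      exact Real.tendsto_exp_atBot.comp (tendsto_id.atTop_mul_const_of_neg hneg))
  rw [intervalIntegral.integral_zero] at hlim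
  exact hlim

theorem leftArcIntegral_eq {x : ℝ} (hx : 0 < x) :
    leftArcIntegral x = ((2 * sinIntegralTail x : ℝ) : ℂ) := by
  refine eqOn_Ioi_of_hasDerivAt_of_tendsto (a := 0)
    (f' := fun y => -((2 * Real.sin y / y : ℝ) : ℂ))
    (fun y hy => hasDerivAt_leftArcIntegral (ne_of_gt hy))
    (fun y hy => ((hasDerivAt_sinIntegralTail hy).const_mul 2).ofReal_comp.congr_deriv
      (by push_cast; ring))
    tendsto_leftArcIntegral_atTop ?_ hx
  have hlim := tendsto_sinIntegralTail_atTop.const_mul 2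
  rw [mul_zero] at hlim
  simpa [Function.comp_def] using (continuous_ofReal.tendsto 0).comp hlim

end LeftArcIntegral

/-- With `U₋(ε) = (1/(2πi))∫_{C₋} Q^{εs} ds/s` over the left semicircle of `|s| = ω`
(parametrized as `(1/(2π))∫_{π/2}^{3π/2} exp(εω e^{iθ} log Q) dθ`) and `R = ω log Q`:
`U₋(ε) = (1/π)∫_R^∞ sin(εy)/y dy` (as an improper integral), and if `εR` is a nonzero
integer multiple of `2π` then `|U₋(ε)| ≫ (εR)⁻¹`. -/
theorem stmt_13 : ∃ c > (0 : ℝ), ∀ Q ω ε : ℝ, 1 < Q → 0 < ω → 0 < ε →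
    (∃ L : ℝ,
      Tendsto (fun T => ∫ y in (ω * Real.log Q)..T, Real.sin (ε * y) / y) atTop (nhds L) ∧
      ((2 * Real.pi)⁻¹ : ℂ) * (∫ θ in (Real.pi / 2)..(3 * Real.pi / 2),
          Complex.exp (((ε * ω * Real.log Q : ℝ) : ℂ) * Complex.exp ((θ : ℂ) * Complex.I)))
        = ((L / Real.pi : ℝ) : ℂ)) ∧
    ((∃ k : ℤ, k ≠ 0 ∧ ε * (ω * Real.log Q) = 2 * Real.pi * (k : ℝ)) →
      c / (ε * (ω * Real.log Q)) ≤
        ‖((2 * Real.pi)⁻¹ : ℂ) * (∫ θ in (Real.pi / 2)..(3 * Real.pi / 2),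
          Complex.exp (((ε * ω * Real.log Q : ℝ) : ℂ) * Complex.exp ((θ : ℂ) * Complex.I)))‖) := by
  refine ⟨(2 * π)⁻¹, by positivity, fun Q ω ε hQ hω hε => ?_⟩
  have hR : 0 < ω * Real.log Q := mul_pos hω (Real.log_pos hQ)
  have hx : 0 < ε * (ω * Real.log Q) := mul_pos hε hR
  have hU : ((2 * π)⁻¹ : ℂ) * leftArcIntegral (ε * ω * Real.log Q) =
      ((sinIntegralTail (ε * (ω * Real.log Q)) / π : ℝ) : ℂ) := by
    rw [mul_assoc, leftArcIntegral_eq hx]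
    push_cast
    field_simp
  refine ⟨⟨_, tendsto_integral_sin_mul_div hε hR, hU⟩, ?_⟩
  rintro ⟨k, -, hxk⟩
  set x := ε * (ω * Real.log Q)
  have hk : (1 : ℝ) ≤ k := by
    have hk0 : (0 : ℝ) < k := pos_of_mul_pos_right (hxk ▸ hx) (by positivity)
    exact_mod_cast (show (0 : ℤ) < k by exact_mod_cast hk0)
  have hx2 : 2 ≤ x := by rw [hxk]; nlinarith [pi_gt_three]
  have hcos : cos x = 1 := by rw [hxk, mul_comm]; exact cos_int_mul_two_pi k
  change _ ≤ ‖((2 * π)⁻¹ : ℂ) * leftArcIntegral (ε * ω * Real.log Q)‖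
  rw [hU, Complex.norm_real, Real.norm_eq_abs]
  calc (2 * π)⁻¹ / x = (2 * x)⁻¹ / π := by field_simp
    _ ≤ sinIntegralTail x / π := by gcongr; exact inv_two_mul_le_sinIntegralTail hx2 hcos
    _ ≤ |sinIntegralTail x / π| := le_abs_self _
end

section
/- Let χ be a real character and define ν, υ by Σν(n)n^{-s} = ζ(s)L(s,χ) and Συ(n)n^{-s} = ζ(s)^{-1}L(s,χ)^{-1}. Then for all n, Σ_{lm=n} |υ(l)| ν(m) ≤ ν(n)τ(n), where τ is the divisor function. -/
/-!
Write `c(n)` for the real number `χ(n)`, a completely multiplicative function with values in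
`{-1, 0, 1}`. Uniqueness of Dirichlet series coefficients gives `ν = 1 * c` and `υ = μ * cμ`.
Both sides of the inequality are then multiplicative in `n`, so it suffices to compare them at
prime powers `p ^ k`. With `t = c(p)` one has `ν(p ^ k) = 1 + t + ⋯ + t ^ k`, while `υ(p ^ k)` is
`1, -(1 + t), t` for `k = 0, 1, 2` and vanishes for `k ≥ 3`; so the left side at `p ^ k` has at
most three terms, and the cases `t = 1, 0, -1` are checked by hand (for `t = 1` the claim reads
`4k ≤ (k + 1)²`).
-/

open Finset Filter LSeries
open scoped ArithmeticFunction.zeta ArithmeticFunction.Moebius ArithmeticFunction.sigma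
  LSeries.notation

lemma geom_sum_nonneg_of_neg_one_le {R : Type*} [Ring R] [LinearOrder R] [IsStrictOrderedRing R]
    {x : R} (hx : -1 ≤ x) (n : ℕ) : 0 ≤ ∑ i ∈ range n, x ^ i := by
  rcases eq_or_ne n 0 with rfl | hn
  · simp
  exact not_lt.mp fun h => ((geom_sum_neg_iff hn).mp h).2.not_ge (neg_le_iff_add_nonneg.mp hx)

lemma geom_sum_three_term_le {t : ℝ} (ht : t = 1 ∨ t = 0 ∨ t = -1) (m : ℕ) :
    ∑ i ∈ range (m + 3), t ^ i + (1 + t) * ∑ i ∈ range (m + 2), t ^ i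
      + |t| * ∑ i ∈ range (m + 1), t ^ i ≤ (∑ i ∈ range (m + 3), t ^ i) * (m + 3) := by
  have hm : (0 : ℝ) ≤ m := m.cast_nonneg
  rcases ht with rfl | rfl | rfl
  · simp only [one_geom_sum, abs_one]
    push_cast
    nlinarith
  · simp only [zero_geom_sum, Nat.add_eq_zero_iff, OfNat.ofNat_ne_zero, and_false, if_false,
      abs_zero]
    linarith
  · simp only [neg_one_geom_sum, Nat.even_add_one, not_not, abs_neg, abs_one]
    split_ifs <;> linarith

lemma LSeries.eq_of_LSeries_eq_of_one_lt_re {f g : ℕ → ℂ} {F : ℂ → ℂ}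
    (hf : ∀ s : ℂ, 1 < s.re → LSeriesSummable f s ∧ LSeries f s = F s)
    (hg : ∀ s : ℂ, 1 < s.re → LSeriesSummable g s ∧ LSeries g s = F s) {n : ℕ}
    (hn : n ≠ 0) : f n = g n := by
  have hconv {h : ℕ → ℂ}
      (hh : ∀ s : ℂ, 1 < s.re → LSeriesSummable h s ∧ LSeries h s = F s) :
      abscissaOfAbsConv h < ⊤ :=
    (hh 2 (by norm_num)).1.abscissaOfAbsConv_le.trans_lt (EReal.coe_lt_top _)
  refine LSeries.eq_of_LSeries_eventually_eq (hconv hf) (hconv hg) ?_ hn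
  filter_upwards [eventually_gt_atTop 1] with x hx
  have hx' : 1 < (x : ℂ).re := by simpa using hx
  exact (hf x hx').2.trans (hg x hx').2.symm

namespace ArithmeticFunction

variable {R : Type*}

lemma mul_apply_prime_pow [Semiring R] (f g : ArithmeticFunction R) {p : ℕ} (hp : p.Prime)
    (k : ℕ) : (f * g) (p ^ k) = ∑ j ∈ range (k + 1), f (p ^ j) * g (p ^ (k - j)) := by
  rw [mul_apply, Nat.sum_divisorsAntidiagonal (f := fun a b => f a * g b),
    Nat.sum_divisors_prime_pow hp]
  refine sum_congr rfl fun j hj => ?_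
  rw [Nat.pow_div (Nat.lt_succ_iff.mp (mem_range.mp hj)) hp.pos]

lemma intCoe_moebius_apply_prime_pow [Ring R] {p : ℕ} (hp : p.Prime) (k : ℕ) :
    (μ : ArithmeticFunction R) (p ^ k) = if k = 0 then 1 else if k = 1 then -1 else 0 := by
  rcases eq_or_ne k 0 with rfl | hk
  · simp
  · rw [intCoe_apply, moebius_apply_prime_pow hp hk]
    split_ifs <;> simp

lemma IsMultiplicative.le_of_prime_pow [CommSemiring R] [PartialOrder R] [IsOrderedRing R]
    {f g : ArithmeticFunction R} (hf : f.IsMultiplicative) (hg : g.IsMultiplicative)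
    (hf0 : ∀ p k, p.Prime → 0 ≤ f (p ^ k))
    (hfg : ∀ p k, p.Prime → k ≠ 0 → f (p ^ k) ≤ g (p ^ k))
    {n : ℕ} (hn : n ≠ 0) : f n ≤ g n := by
  rw [hf.multiplicative_factorization f hn, hg.multiplicative_factorization g hn]
  refine prod_le_prod (fun p hp => hf0 _ _ ?_)
    fun p hp => hfg _ _ ?_ (Finsupp.mem_support_iff.mp hp)
  all_goals exact Nat.prime_of_mem_primeFactors (Nat.support_factorization n ▸ hp)

def abs [Ring R] [LinearOrder R] [IsStrictOrderedRing R] (f : ArithmeticFunction R) :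
    ArithmeticFunction R :=
  ⟨fun n => |f n|, by simp⟩

@[simp]
lemma abs_apply [Ring R] [LinearOrder R] [IsStrictOrderedRing R] (f : ArithmeticFunction R)
    (n : ℕ) : abs f n = |f n| := rfl

lemma IsMultiplicative.abs [CommRing R] [LinearOrder R] [IsStrictOrderedRing R]
    {f : ArithmeticFunction R} (hf : f.IsMultiplicative) : (abs f).IsMultiplicative :=
  ⟨by simp [hf.map_one], fun h => by simp [hf.map_mul_of_coprime h, abs_mul]⟩

def ofMonoidWithZeroHom [MulZeroOneClass R] (c : ℕ →*₀ R) : ArithmeticFunction R :=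
  c.toZeroHom

@[simp]
lemma ofMonoidWithZeroHom_apply [MulZeroOneClass R] (c : ℕ →*₀ R) (n : ℕ) :
    ofMonoidWithZeroHom c n = c n := rfl

lemma isMultiplicative_ofMonoidWithZeroHom [MonoidWithZero R] (c : ℕ →*₀ R) :
    (ofMonoidWithZeroHom c).IsMultiplicative :=
  ⟨map_one c, fun _ => map_mul c _ _⟩

section CommRing

variable [CommRing R] (c : ℕ →*₀ R)

-- `ν` and `υ` of the paper: the coefficients of `ζ(s) L(s, c)` and of `(ζ(s) L(s, c))⁻¹`.
noncomputable def nu : ArithmeticFunction R := ζ * ofMonoidWithZeroHom c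

noncomputable def upsilon : ArithmeticFunction R := μ * (ofMonoidWithZeroHom c).pmul μ

lemma isMultiplicative_nu : (nu c).IsMultiplicative :=
  isMultiplicative_zeta.natCast.mul (isMultiplicative_ofMonoidWithZeroHom c)

lemma isMultiplicative_upsilon : (upsilon c).IsMultiplicative :=
  isMultiplicative_moebius.intCast.mul
    ((isMultiplicative_ofMonoidWithZeroHom c).pmul isMultiplicative_moebius.intCast)

variable {c} {p : ℕ} (hp : p.Prime)
include hp

lemma nu_apply_prime_pow (k : ℕ) : nu c (p ^ k) = ∑ i ∈ range (k + 1), c p ^ i := by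
  simp only [nu, coe_zeta_mul_apply, Nat.sum_divisors_prime_pow hp, ofMonoidWithZeroHom_apply,
    map_pow]

lemma upsilon_apply_prime : upsilon c p = -(1 + c p) := by
  conv_lhs => rw [← pow_one p]
  simp only [upsilon, mul_apply_prime_pow _ _ hp, sum_range_succ, pmul_apply,
    intCoe_moebius_apply_prime_pow hp]
  simp

lemma upsilon_apply_prime_sq : upsilon c (p ^ 2) = c p := by
  simp only [upsilon, mul_apply_prime_pow _ _ hp, sum_range_succ, pmul_apply,
    intCoe_moebius_apply_prime_pow hp]
  simp

lemma upsilon_apply_prime_pow_of_three_le {k : ℕ} (hk : 3 ≤ k) : upsilon c (p ^ k) = 0 := by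
  rw [upsilon, mul_apply_prime_pow _ _ hp]
  refine sum_eq_zero fun j hj => ?_
  simp only [pmul_apply, intCoe_moebius_apply_prime_pow hp]
  split_ifs <;> first | omega | simp

end CommRing

section Real

variable {c : ℕ →*₀ ℝ} {p : ℕ} (hp : p.Prime)
include hp

lemma abs_upsilon_mul_nu_apply_prime_pow_nonneg (hc : -1 ≤ c p) (k : ℕ) :
    0 ≤ ((upsilon c).abs * nu c) (p ^ k) := by
  rw [mul_apply_prime_pow _ _ hp]
  exact sum_nonneg fun j _ => mul_nonneg (abs_nonneg _)
    (by rw [nu_apply_prime_pow hp]; exact geom_sum_nonneg_of_neg_one_le hc _)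

lemma abs_upsilon_mul_nu_apply_prime_pow_le (hc : c p = 1 ∨ c p = 0 ∨ c p = -1) {k : ℕ}
    (hk : k ≠ 0) : ((upsilon c).abs * nu c) (p ^ k) ≤ ((nu c).pmul ↑(σ 0)) (p ^ k) := by
  have habs : |upsilon c p| = 1 + c p := by
    rw [upsilon_apply_prime hp, abs_neg, abs_of_nonneg]
    rcases hc with h | h | h <;> simp [h]
  rw [pmul_apply, natCoe_apply, sigma_zero_apply_prime_pow hp, mul_apply_prime_pow _ _ hp]
  obtain rfl | ⟨m, rfl⟩ : k = 1 ∨ ∃ m, k = m + 2 := by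
    rcases k with _ | _ | m <;> simp_all
  · have hνp : nu c p = 1 + c p := by
      simpa [sum_range_succ] using nu_apply_prime_pow (c := c) hp 1
    simp only [sum_range_succ, sum_range_zero, zero_add, abs_apply, pow_zero, pow_one,
      Nat.sub_zero, Nat.sub_self, (isMultiplicative_upsilon c).map_one,
      (isMultiplicative_nu c).map_one, abs_one, habs, hνp]
    push_cast
    linarith
  · have htail :
        ∑ j ∈ range m, (upsilon c).abs (p ^ (3 + j)) * nu c (p ^ (m + 2 - (3 + j))) = 0 :=
      sum_eq_zero fun j _ => by
        rw [abs_apply, upsilon_apply_prime_pow_of_three_le hp (by omega), abs_zero, zero_mul]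
    have hν0 : nu c (p ^ m) = ∑ i ∈ range (m + 1), c p ^ i := nu_apply_prime_pow hp m
    have hν1 : nu c (p ^ (m + 1)) = ∑ i ∈ range (m + 2), c p ^ i := nu_apply_prime_pow hp _
    have hν2 : nu c (p ^ (m + 2)) = ∑ i ∈ range (m + 3), c p ^ i := nu_apply_prime_pow hp _
    rw [show m + 2 + 1 = 3 + m by ring, sum_range_add, htail, add_zero, sum_range_succ,
      sum_range_succ, sum_range_one]
    simp only [abs_apply, pow_zero, pow_one, Nat.sub_zero, show m + 2 - 1 = m + 1 by omega,
      Nat.add_sub_cancel, (isMultiplicative_upsilon c).map_one, abs_one, one_mul, habs,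
      upsilon_apply_prime_sq hp, hν0, hν1, hν2]
    push_cast
    linarith [geom_sum_three_term_le hc m]

end Real

theorem abs_upsilon_mul_nu_le_pmul_sigma_zero {c : ℕ →*₀ ℝ}
    (hc : ∀ p, p.Prime → c p = 1 ∨ c p = 0 ∨ c p = -1) {n : ℕ} (hn : n ≠ 0) :
    ((upsilon c).abs * nu c) n ≤ ((nu c).pmul ↑(σ 0)) n :=
  ((isMultiplicative_upsilon c).abs.mul (isMultiplicative_nu c)).le_of_prime_pow
    ((isMultiplicative_nu c).pmul isMultiplicative_sigma.natCast)
    (fun p k hp => abs_upsilon_mul_nu_apply_prime_pow_nonneg hp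
      (by rcases hc p hp with h | h | h <;> simp [h]) k)
    (fun p _ hp hk => abs_upsilon_mul_nu_apply_prime_pow_le hp (hc p hp) hk) hn

lemma ofReal_nu_apply {c : ℕ →*₀ ℝ} {f : ℕ → ℂ} (hc : ∀ n ≠ 0, (c n : ℂ) = f n)
    (n : ℕ) :
    (nu c n : ℂ) = (1 ⍟ f) n := by
  rw [convolution_def, nu, mul_apply]
  push_cast
  refine sum_congr rfl fun p hp => ?_
  obtain ⟨h1, h2⟩ := Nat.ne_zero_of_mem_divisorsAntidiagonal hp
  simp [h1, hc _ h2]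

lemma ofReal_upsilon_apply {c : ℕ →*₀ ℝ} {f : ℕ → ℂ} (hc : ∀ n ≠ 0, (c n : ℂ) = f n)
    (n : ℕ) :
    (upsilon c n : ℂ) = (↗μ ⍟ (f * ↗μ)) n := by
  rw [convolution_def, upsilon, mul_apply]
  push_cast
  refine sum_congr rfl fun p hp => ?_
  obtain ⟨h1, h2⟩ := Nat.ne_zero_of_mem_divisorsAntidiagonal hp
  simp [hc _ h2]

end ArithmeticFunction

namespace DirichletCharacter

variable {D : ℕ} (χ : DirichletCharacter ℂ D)

lemma eq_one_or_eq_zero_or_eq_neg_one_of_ofReal_eq {x : ℝ} {a : ZMod D} (h : (x : ℂ) = χ a) :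
    x = 1 ∨ x = 0 ∨ x = -1 := by
  by_cases ha : IsUnit a
  · have : |x| = 1 := by simpa [← h] using χ.unit_norm_eq_one ha.unit
    rcases (abs_eq zero_le_one).mp this with h | h <;> simp [h]
  · exact Or.inr (Or.inl (by exact_mod_cast h.trans (χ.map_nonunit ha)))

lemma exists_monoidWithZeroHom_ofReal_eq (hχ : ∀ a, (χ a).im = 0) :
    ∃ c : ℕ →*₀ ℝ, ∀ n ≠ 0, (c n : ℂ) = χ n := by
  have hre (a : ZMod D) : ((χ a).re : ℂ) = χ a := Complex.ext (by simp) (by simp [hχ a])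
  -- The value at `0` is forced: for `D = 1` one has `χ 0 = 1`.
  let c : ℕ →*₀ ℝ :=
    { toFun n := if n = 0 then 0 else (χ n).re
      map_zero' := if_pos rfl
      map_one' := by simp
      map_mul' m n := by
        rcases eq_or_ne m 0 with rfl | hm
        · simp
        rcases eq_or_ne n 0 with rfl | hn
        · simp
        simp [hm, hn, Complex.mul_re, hχ] }
  exact ⟨c, fun n hn => by simp [c, hn, hre]⟩

lemma LSeries_one_convolution {s : ℂ} (hs : 1 < s.re) :
    LSeriesSummable (1 ⍟ ↗χ) s ∧
      LSeries (1 ⍟ ↗χ) s = riemannZeta s * LSeries ↗χ s := by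
  have h1 := LSeriesSummable_one_iff.mpr hs
  have hχ := χ.LSeriesSummable_of_one_lt_re hs
  exact ⟨h1.convolution hχ, by rw [LSeries_convolution' h1 hχ, LSeries_one_eq_riemannZeta hs]⟩

lemma LSeries_moebius_convolution {s : ℂ} (hs : 1 < s.re) :
    LSeriesSummable (↗μ ⍟ (↗χ * ↗μ)) s ∧
      LSeries (↗μ ⍟ (↗χ * ↗μ)) s = (riemannZeta s)⁻¹ * (LSeries ↗χ s)⁻¹ := by
  have hμ := ArithmeticFunction.LSeriesSummable_moebius_iff.mpr hs
  have hχμ := χ.LSeriesSummable_mul hμ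
  refine ⟨hμ.convolution hχμ, ?_⟩
  rw [LSeries_convolution' hμ hχμ, ← LSeries_one_eq_riemannZeta hs,
    eq_inv_of_mul_eq_one_right (LSeries_one_mul_Lseries_moebius hs),
    eq_inv_of_mul_eq_one_right (LSeries.mul_mu_eq_one χ hs)]

end DirichletCharacter

theorem stmt_15_general (D : ℕ) (χ : DirichletCharacter ℂ D)
    (hχreal : ∀ a : ZMod D, (χ a).im = 0)
    (ν υ : ℕ → ℝ)
    (hν : ∀ s : ℂ, 1 < s.re → LSeriesSummable (fun n => (ν n : ℂ)) s ∧
      LSeries (fun n => (ν n : ℂ)) s = riemannZeta s * LSeries (fun n => χ (n : ZMod D)) s)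
    (hυ : ∀ s : ℂ, 1 < s.re → LSeriesSummable (fun n => (υ n : ℂ)) s ∧
      LSeries (fun n => (υ n : ℂ)) s =
        (riemannZeta s)⁻¹ * (LSeries (fun n => χ (n : ZMod D)) s)⁻¹) :
    ∀ n : ℕ, 1 ≤ n →
      ∑ p ∈ n.divisorsAntidiagonal, |υ p.1| * ν p.2 ≤ ν n * (n.divisors.card : ℝ) := by
  obtain ⟨c, hc⟩ := χ.exists_monoidWithZeroHom_ofReal_eq hχreal
  have hν' : ∀ m ≠ 0, ν m = ArithmeticFunction.nu c m := fun m hm => by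
    exact_mod_cast (LSeries.eq_of_LSeries_eq_of_one_lt_re hν
      (fun s hs => χ.LSeries_one_convolution hs) hm).trans
      (ArithmeticFunction.ofReal_nu_apply hc m).symm
  have hυ' : ∀ m ≠ 0, υ m = ArithmeticFunction.upsilon c m := fun m hm => by
    exact_mod_cast (LSeries.eq_of_LSeries_eq_of_one_lt_re hυ
      (fun s hs => χ.LSeries_moebius_convolution hs) hm).trans
      (ArithmeticFunction.ofReal_upsilon_apply hc m).symm
  intro n hn
  calc ∑ p ∈ n.divisorsAntidiagonal, |υ p.1| * ν p.2
        = ((ArithmeticFunction.upsilon c).abs * ArithmeticFunction.nu c) n := by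
        rw [ArithmeticFunction.mul_apply]
        refine sum_congr rfl fun p hp => ?_
        obtain ⟨h1, h2⟩ := Nat.ne_zero_of_mem_divisorsAntidiagonal hp
        rw [ArithmeticFunction.abs_apply, hυ' _ h1, hν' _ h2]
    _ ≤ ((ArithmeticFunction.nu c).pmul ↑(σ 0)) n :=
        ArithmeticFunction.abs_upsilon_mul_nu_le_pmul_sigma_zero
        (fun p hp => χ.eq_one_or_eq_zero_or_eq_neg_one_of_ofReal_eq (hc p hp.ne_zero)) (by omega)
    _ = ν n * n.divisors.card := by
        rw [ArithmeticFunction.pmul_apply, ArithmeticFunction.natCoe_apply,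
          ArithmeticFunction.sigma_zero_apply, hν' n (by omega)]

/-- Let `χ` be a real Dirichlet character mod `D` and let `ν, υ` be defined by
`Σ ν(n) n^{-s} = ζ(s) L(s,χ)` and `Σ υ(n) n^{-s} = ζ(s)⁻¹ L(s,χ)⁻¹` (for `Re s > 1`).
Then for all `n ≥ 1`, `Σ_{lm=n} |υ(l)| ν(m) ≤ ν(n) τ(n)`. -/
theorem stmt_15 (D : ℕ) (hD : 0 < D) (χ : DirichletCharacter ℂ D)
    (hχreal : ∀ a : ZMod D, (χ a).im = 0)
    (ν υ : ℕ → ℝ)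
    (hν : ∀ s : ℂ, 1 < s.re → LSeriesSummable (fun n => (ν n : ℂ)) s ∧
      LSeries (fun n => (ν n : ℂ)) s = riemannZeta s * LSeries (fun n => χ (n : ZMod D)) s)
    (hυ : ∀ s : ℂ, 1 < s.re → LSeriesSummable (fun n => (υ n : ℂ)) s ∧
      LSeries (fun n => (υ n : ℂ)) s =
        (riemannZeta s)⁻¹ * (LSeries (fun n => χ (n : ZMod D)) s)⁻¹) :
    ∀ n : ℕ, 1 ≤ n →
      ∑ p ∈ n.divisorsAntidiagonal, |υ p.1| * ν p.2 ≤ ν n * (n.divisors.card : ℝ) :=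
  stmt_15_general D χ hχreal ν υ hν hυ
end

section
/- For a Dirichlet polynomial P(s) = Σ_{n≤N} aₙ n^{-s} and a set S of points ρ = 1/2 + iγ on the critical line with |γ − D| < 1, pairwise separated by at least 2α (i.e. distinct ρ, ρ' ∈ S satisfy |ρ−ρ'| ≥ 2α), one has Σ_{ρ∈S} |P(ρ)|² ≪ ∫_{D−2}^{D+2} ( α^{-1} |P(1/2+it)|² + α |P'(1/2+it)|² ) dt, with an absolute implied constant. -/
/-!
Let `γ ∈ S`. At a point `c ∈ [γ - α, γ + α]` where `‖P‖²` equals its mean over that interval,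
`‖P c‖² ≤ ½ ∫ (α⁻¹ ‖P‖² + α ‖P'‖²)`. Since `(‖P‖²)' = 2⟪P, P'⟫` and
`|2⟪P, P'⟫| ≤ α⁻¹ ‖P‖² + α ‖P'‖²`, the fundamental theorem of calculus bounds `‖P γ‖² - ‖P c‖²`
by the same integral, so `‖P γ‖² ≤ 3/2 ∫_{γ-α}^{γ+α} (α⁻¹ ‖P‖² + α ‖P'‖²)`. The separation makes
these intervals pairwise disjoint, and `|γ - D| < 1`, `α < 1` put them inside `[D - 2, D + 2]`.
-/

open MeasureTheory Set intervalIntegral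
open scoped RealInnerProductSpace

lemma abs_two_mul_inner_le {E : Type*} [NormedAddCommGroup E] [InnerProductSpace ℝ E]
    (x y : E) {α : ℝ} (hα : 0 < α) :
    |2 * ⟪x, y⟫| ≤ α⁻¹ * ‖x‖ ^ 2 + α * ‖y‖ ^ 2 := by
  have hamgm : α⁻¹ * ‖x‖ ^ 2 + α * ‖y‖ ^ 2 - 2 * (‖x‖ * ‖y‖) = α⁻¹ * (‖x‖ - α * ‖y‖) ^ 2 := by
    field_simp; ring
  rw [abs_mul, abs_two]
  nlinarith [abs_real_inner_le_norm x y, (by positivity : 0 ≤ α⁻¹ * (‖x‖ - α * ‖y‖) ^ 2)]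

section Sobolev

variable {E : Type*} [NormedAddCommGroup E] [InnerProductSpace ℝ E]
  {f f' : ℝ → E} {α : ℝ}

lemma sq_norm_sub_sq_norm_le_integral (hf : ∀ t, HasDerivAt f (f' t) t) (hf' : Continuous f')
    (hα : 0 < α) {a b s t : ℝ} (hs : s ∈ Icc a b) (ht : t ∈ Icc a b) :
    ‖f s‖ ^ 2 - ‖f t‖ ^ 2 ≤ ∫ u in a..b, (α⁻¹ * ‖f u‖ ^ 2 + α * ‖f' u‖ ^ 2) := by
  have hf_cont : Continuous f := continuous_iff_continuousAt.2 fun t => (hf t).continuousAt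
  have hg_cont : Continuous fun u => α⁻¹ * ‖f u‖ ^ 2 + α * ‖f' u‖ ^ 2 := by fun_prop
  have hab : a ≤ b := hs.1.trans hs.2
  calc ‖f s‖ ^ 2 - ‖f t‖ ^ 2 = ∫ u in t..s, 2 * ⟪f u, f' u⟫ :=
        (integral_eq_sub_of_hasDerivAt (fun u _ => (hf u).norm_sq)
          ((by fun_prop : Continuous fun u => 2 * ⟪f u, f' u⟫).intervalIntegrable _ _)).symm
    _ ≤ |∫ u in t..s, (α⁻¹ * ‖f u‖ ^ 2 + α * ‖f' u‖ ^ 2)| :=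
        (Real.le_norm_self _).trans <| norm_integral_le_abs_of_norm_le
          (ae_of_all _ fun u => abs_two_mul_inner_le _ _ hα) (hg_cont.intervalIntegrable _ _)
    _ ≤ |∫ u in a..b, (α⁻¹ * ‖f u‖ ^ 2 + α * ‖f' u‖ ^ 2)| :=
        abs_integral_mono_interval
          (uIoc_subset_uIoc_of_uIcc_subset_uIcc
            (uIcc_subset_uIcc (Icc_subset_uIcc ht) (Icc_subset_uIcc hs)))
          (ae_of_all _ fun u => by positivity) (hg_cont.intervalIntegrable _ _)
    _ = ∫ u in a..b, (α⁻¹ * ‖f u‖ ^ 2 + α * ‖f' u‖ ^ 2) :=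
        abs_of_nonneg (integral_nonneg hab fun u _ => by positivity)

theorem sq_norm_le_integral (hf : ∀ t, HasDerivAt f (f' t) t) (hf' : Continuous f')
    (hα : 0 < α) (γ : ℝ) :
    ‖f γ‖ ^ 2 ≤ 3 / 2 * ∫ t in γ - α..γ + α, (α⁻¹ * ‖f t‖ ^ 2 + α * ‖f' t‖ ^ 2) := by
  set G := ∫ t in γ - α..γ + α, (α⁻¹ * ‖f t‖ ^ 2 + α * ‖f' t‖ ^ 2)
  have hf_cont : Continuous f := continuous_iff_continuousAt.2 fun t => (hf t).continuousAt
  have hlt : γ - α < γ + α := by linarith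
  obtain ⟨c, hc, hc_mean⟩ := exists_eq_interval_average hlt.ne
    (by fun_prop : Continuous fun t => ‖f t‖ ^ 2).continuousOn
  have hc_mem : c ∈ Icc (γ - α) (γ + α) := uIcc_of_le hlt.le ▸ uIoo_subset_uIcc_self hc
  have hmean : ∫ t in γ - α..γ + α, ‖f t‖ ^ 2 ≤ α * G := by
    rw [← intervalIntegral.integral_const_mul]
    refine integral_mono_on hlt.le ((by fun_prop : Continuous _).intervalIntegrable _ _)
      ((by fun_prop : Continuous _).intervalIntegrable _ _) fun t _ => ?_
    rw [mul_add, mul_inv_cancel_left₀ hα.ne']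
    nlinarith [sq_nonneg (α * ‖f' t‖)]
  have hc_le : ‖f c‖ ^ 2 ≤ G / 2 := by
    rw [hc_mean, interval_average_eq_div, div_le_iff₀ (by linarith)]
    linarith
  have hγc := sq_norm_sub_sq_norm_le_integral hf hf' hα (s := γ) (a := γ - α) (b := γ + α)
    ⟨by linarith, by linarith⟩ hc_mem
  linarith

end Sobolev

lemma sum_integral_le_integral_of_separated {g : ℝ → ℝ} {a b α : ℝ} {S : Finset ℝ}
    (hg : IntegrableOn g (Ioc a b)) (hg_nonneg : ∀ t, 0 ≤ g t) (hab : a ≤ b) (hα : 0 ≤ α)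
    (hS : ∀ γ ∈ S, a ≤ γ - α ∧ γ + α ≤ b)
    (hsep : ∀ γ ∈ S, ∀ γ' ∈ S, γ ≠ γ' → 2 * α ≤ |γ - γ'|) :
    ∑ γ ∈ S, ∫ t in γ - α..γ + α, g t ≤ ∫ t in a..b, g t := by
  have hsub : ∀ γ ∈ S, Ioc (γ - α) (γ + α) ⊆ Ioc a b := fun γ hγ =>
    Ioc_subset_Ioc (hS γ hγ).1 (hS γ hγ).2
  have hdisj : (S : Set ℝ).PairwiseDisjoint fun γ => Ioc (γ - α) (γ + α) := by
    intro γ hγ γ' hγ' hne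
    rw [Function.onFun, Ioc_disjoint_Ioc]
    rcases le_abs.mp (hsep γ hγ γ' hγ' hne) with h | h
    · exact (min_le_right _ _).trans (le_max_of_le_left (by linarith))
    · exact (min_le_left _ _).trans (le_max_of_le_right (by linarith))
  calc ∑ γ ∈ S, ∫ t in γ - α..γ + α, g t = ∑ γ ∈ S, ∫ t in Ioc (γ - α) (γ + α), g t :=
        Finset.sum_congr rfl fun γ _ => integral_of_le (by linarith)
    _ = ∫ t in ⋃ γ ∈ S, Ioc (γ - α) (γ + α), g t :=
        (integral_biUnion_finset S (fun _ _ => measurableSet_Ioc) hdisj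
          fun γ hγ => hg.mono_set (hsub γ hγ)).symm
    _ ≤ ∫ t in Ioc a b, g t :=
        setIntegral_mono_set hg (ae_of_all _ fun t => hg_nonneg t)
          (ae_of_all _ (iUnion₂_subset hsub))
    _ = ∫ t in a..b, g t := (integral_of_le hab).symm

noncomputable def dirichletPoly (N : ℕ) (a : ℕ → ℂ) (s : ℂ) : ℂ :=
  ∑ n ∈ Finset.Icc 1 N, a n * (n : ℂ) ^ (-s)

lemma hasDerivAt_dirichletPoly (N : ℕ) (a : ℕ → ℂ) (s : ℂ) :
    HasDerivAt (dirichletPoly N a) (-dirichletPoly N (fun n => a n * Real.log n) s) s := by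
  unfold dirichletPoly
  rw [← Finset.sum_neg_distrib]
  refine HasDerivAt.fun_sum fun n hn => ?_
  have hn0 : (n : ℂ) ≠ 0 := Nat.cast_ne_zero.mpr (Nat.pos_iff_ne_zero.mp (Finset.mem_Icc.mp hn).1)
  refine (((hasDerivAt_neg' s).const_cpow (Or.inl hn0)).const_mul (a n)).congr_deriv ?_
  rw [← Complex.ofReal_natCast, ← Complex.ofReal_log n.cast_nonneg]
  ring

lemma differentiable_dirichletPoly (N : ℕ) (a : ℕ → ℂ) : Differentiable ℂ (dirichletPoly N a) :=
  fun s => (hasDerivAt_dirichletPoly N a s).differentiableAt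

lemma hasDerivAt_dirichletPoly_criticalLine (N : ℕ) (a : ℕ → ℂ) (t : ℝ) :
    HasDerivAt (fun t : ℝ => dirichletPoly N a (1 / 2 + t * Complex.I))
      (-dirichletPoly N (fun n => a n * Real.log n) (1 / 2 + t * Complex.I) * Complex.I) t := by
  have hline : HasDerivAt (fun s : ℂ => 1 / 2 + s * Complex.I) Complex.I t := by
    simpa using ((hasDerivAt_id (t : ℂ)).mul_const Complex.I).const_add (1 / 2 : ℂ)
  exact ((hasDerivAt_dirichletPoly N a _).comp (t : ℂ) hline).comp_ofReal

lemma sq_norm_dirichletPoly_criticalLine_le (N : ℕ) (a : ℕ → ℂ) {α : ℝ} (hα : 0 < α) (γ : ℝ) :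
    ‖dirichletPoly N a (1 / 2 + γ * Complex.I)‖ ^ 2 ≤ 3 / 2 * ∫ t in γ - α..γ + α,
      (α⁻¹ * ‖dirichletPoly N a (1 / 2 + t * Complex.I)‖ ^ 2 +
        α * ‖dirichletPoly N (fun n => a n * Real.log n) (1 / 2 + t * Complex.I)‖ ^ 2) := by
  have hQ := (differentiable_dirichletPoly N (fun n => a n * Real.log n)).continuous
  simpa only [norm_mul, norm_neg, Complex.norm_I, mul_one] using
    sq_norm_le_integral (hasDerivAt_dirichletPoly_criticalLine N a) (by fun_prop) hα γ

/-- Hybrid mean-value bound: for a Dirichlet polynomial `P(s) = Σ_{n≤N} aₙ n^{-s}` and a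
set `S` of ordinates `γ` with `|γ − D| < 1` whose points `ρ = 1/2 + iγ` are pairwise
separated by at least `2α` (`0 < α < 1`),
`Σ_{ρ∈S} |P(ρ)|² ≪ ∫_{D−2}^{D+2} (α⁻¹ |P(1/2+it)|² + α |P'(1/2+it)|²) dt`,
with an absolute implied constant. -/
theorem stmt_19 : ∃ C > (0 : ℝ),
    ∀ (N : ℕ) (a : ℕ → ℂ) (α D : ℝ) (S : Finset ℝ),
    0 < α → α < 1 →
    (∀ γ ∈ S, |γ - D| < 1) →
    (∀ γ ∈ S, ∀ γ' ∈ S, γ ≠ γ' → 2 * α ≤ |γ - γ'|) →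
    ∑ γ ∈ S,
        ‖∑ n ∈ Finset.Icc 1 N, a n * (n : ℂ) ^ (-((1 : ℂ) / 2 + (γ : ℂ) * Complex.I))‖ ^ 2
      ≤ C * ∫ t in (D - 2)..(D + 2),
          (α⁻¹ * ‖∑ n ∈ Finset.Icc 1 N,
              a n * (n : ℂ) ^ (-((1 : ℂ) / 2 + (t : ℂ) * Complex.I))‖ ^ 2
            + α * ‖∑ n ∈ Finset.Icc 1 N,
              a n * (Real.log n : ℂ) * (n : ℂ) ^ (-((1 : ℂ) / 2 + (t : ℂ) * Complex.I))‖ ^ 2) := by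
  refine ⟨3 / 2, by norm_num, fun N a α D S hα hα_lt_one hD hsep => ?_⟩
  have hP := (differentiable_dirichletPoly N a).continuous
  have hQ := (differentiable_dirichletPoly N (fun n => a n * Real.log n)).continuous
  refine (Finset.sum_le_sum fun γ _ => sq_norm_dirichletPoly_criticalLine_le N a hα γ).trans ?_
  rw [← Finset.mul_sum]
  gcongr
  refine sum_integral_le_integral_of_separated (by fun_prop : Continuous _).integrableOn_Ioc
    (fun t => by positivity) (by linarith) hα.le (fun γ hγ => ?_) hsep
  have := abs_lt.mp (hD γ hγ)
  constructor <;> linarith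
end
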